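/- arXiv:2305.11032 — 5 statements merged into one kernel-verified Lean document; each statement's English description precedes it below -/
import Mathlib

section
/- Theorem 1 (deterministic core of the Optimistic NPG guarantee). Let (S, A, P, R, H) be an episodic MDP with initial state s₁, let η > 0, K ∈ ℕ, and ε' ≥ 0. Let π¹ be the uniform policy (π¹_h(a|s) = 1/|A| for all h, s, a) and, for k = 1,…,K, let Q̄^k_h : S×A → [0,H] (h ∈ {1,…,H}) be arbitrary functions, with Q̄^k_{H+1} ≡ 0, and define the mirror-ascent update π^{k+1}_h(a|s) = π^k_h(a|s)·exp(η Q̄^k_h(s,a)) / Σ_{a'∈A} π^k_h(a'|s)·exp(η Q̄^k_h(s,a')). Set V̄^k_1(s₁) = Σ_{a∈A} π^k_1(a|s₁) Q̄^k_1(s₁,a). Assume that for every k ∈ {1,…,K}: (optimism) Q̄^k_h(s,a) ≥ (T_h^{π^k} Q̄^k_{h+1})(s,a) for all (h,s,a); and (consistency) V̄^k_1(s₁) − V^{π^k}_1(s₁) ≤ ε'. Then there exists an absolute constant C > 0 such that (1/K) Σ_{k=1}^K (V^⋆_1(s₁) − V^{π^k}_1(s₁)) ≤ C·(H·log|A| /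 (ηK) + η·H³) + ε'. -/
open Finset

noncomputable def Vaux {S A : Type} [Fintype S] [Fintype A]
    (P : ℕ → S → A → S → ℝ) (R : ℕ → S → A → ℝ) (π : ℕ → S → A → ℝ) :
    ℕ → ℕ → S → ℝ
  | 0, _, _ => 0
  | (t+1), h, s =>
      ∑ a, π h s a * (R h s a + ∑ s', P h s a s' * Vaux P R π t (h+1) s')

/-- `Val P R H π h s` : value function `V_h^π(s)` (steps are 0-based, `h ∈ {0,…,H}`). -/
noncomputable def Val {S A : Type} [Fintype S] [Fintype A]
    (P : ℕ → S → A → S → ℝ) (R : ℕ → S → A → ℝ) (H : ℕ) (π : ℕ → S → A → ℝ)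
    (h : ℕ) (s : S) : ℝ :=
  Vaux P R π (H - h) h s

/-- law of `s_h` under policy `π` started from `s₁` (0-based: `visit _ _ _ 0 = δ_{s₁}`). -/
noncomputable def visit {S A : Type} [Fintype S] [Fintype A] [DecidableEq S]
    (P : ℕ → S → A → S → ℝ) (π : ℕ → S → A → ℝ) (s₁ : S) : ℕ → S → ℝ
  | 0, s => if s = s₁ then 1 else 0
  | (h+1), s' => ∑ s, ∑ a, visit P π s₁ h s * π h s a * P h s a s'

/-- `E_π[f(s_h,a_h)]`. -/
noncomputable def Epi {S A : Type} [Fintype S] [Fintype A] [DecidableEq S]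
    (P : ℕ → S → A → S → ℝ) (π : ℕ → S → A → ℝ) (s₁ : S) (h : ℕ)
    (f : S → A → ℝ) : ℝ :=
  ∑ s, ∑ a, visit P π s₁ h s * π h s a * f s a

/-- Bellman operator `T_h^π` applied to `Q_{h+1}`. -/
noncomputable def Bellman {S A : Type} [Fintype S] [Fintype A]
    (P : ℕ → S → A → S → ℝ) (R : ℕ → S → A → ℝ) (π : ℕ → S → A → ℝ)
    (h : ℕ) (Q : S → A → ℝ) (s : S) (a : A) : ℝ :=
  R h s a + ∑ s', P h s a s' * ∑ a', π (h+1) s' a' * Q s' a'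

def IsPolicy {S A : Type} [Fintype A] (H : ℕ) (π : ℕ → S → A → ℝ) : Prop :=
  ∀ h < H, ∀ s, (∀ a, 0 ≤ π h s a) ∧ ∑ a, π h s a = 1

def IsKernel {S A : Type} [Fintype S] (H : ℕ) (P : ℕ → S → A → S → ℝ) : Prop :=
  ∀ h < H, ∀ s a, (∀ s', 0 ≤ P h s a s') ∧ ∑ s', P h s a s' = 1

def IsReward {S A : Type} (H : ℕ) (R : ℕ → S → A → ℝ) : Prop :=
  ∀ h < H, ∀ s a, 0 ≤ R h s a ∧ R h s a ≤ 1

lemma exp_le_add_exp_sq (x : ℝ) : Real.exp x ≤ x + Real.exp (x^2) := by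
  rcases le_or_gt x (-1) with h | h
  · have h1 : Real.exp x ≤ 1 := Real.exp_le_one_iff.2 (by linarith)
    have h2 : (-x) ≤ x^2 := by nlinarith
    have h3 : Real.exp (-x) ≤ Real.exp (x^2) := Real.exp_le_exp.2 h2
    have h4 : (-x) + 1 ≤ Real.exp (-x) := Real.add_one_le_exp _
    linarith
  rcases le_or_gt 1 x with h2 | h2
  · have h3 : x ≤ x^2 := by nlinarith
    have := Real.exp_le_exp.2 h3
    have h5 : (0:ℝ) < Real.exp (x^2) := Real.exp_pos _
    nlinarith
  · have hb : |x| ≤ 1 := by rw [abs_le]; constructor <;> linarith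
    have hB := Real.exp_bound hb (by norm_num : 0 < 2)
    have hsum : ∑ i ∈ Finset.range 2, x ^ i / (Nat.factorial i) = 1 + x := by
      simp [Finset.sum_range_succ, Nat.factorial]
    rw [hsum] at hB
    norm_num at hB
    have h1x : 1 + x^2 ≤ Real.exp (x^2) := by
      have := Real.add_one_le_exp (x^2); linarith
    have hx2 : |x|^2 = x^2 := sq_abs x
    have h6 := (abs_le.1 hB).2
    nlinarith

lemma log_expsum_le {A : Type} [Fintype A] (p g : A → ℝ) (t B : ℝ)
    (hp : ∀ a, 0 ≤ p a) (hps : ∑ a, p a = 1)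
    (hg : ∀ a, |g a - ∑ b, p b * g b| ≤ B) :
    Real.log (∑ a, p a * Real.exp (t * g a)) ≤ t * (∑ a, p a * g a) + t^2 * B^2 := by
  set μ := ∑ b, p b * g b with hμ
  -- positivity of the sum
  have hpos : 0 < ∑ a, p a * Real.exp (t * g a) := by
    obtain ⟨a0, ha0⟩ : ∃ a, p a ≠ 0 := by
      by_contra hc
      push_neg at hc
      simp [hc] at hps
    have h1 : 0 < p a0 * Real.exp (t * g a0) :=
      mul_pos (lt_of_le_of_ne (hp a0) (Ne.symm ha0)) (Real.exp_pos _)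
    have h2 : ∀ a ∈ Finset.univ, 0 ≤ p a * Real.exp (t * g a) :=
      fun a _ => mul_nonneg (hp a) (Real.exp_pos _).le
    exact lt_of_lt_of_le h1 (Finset.single_le_sum h2 (Finset.mem_univ a0))
  -- main bound
  have key : ∑ a, p a * Real.exp (t * g a) ≤ Real.exp (t * μ + t^2 * B^2) := by
    have h1 : ∀ a, p a * Real.exp (t * g a)
        = Real.exp (t * μ) * (p a * Real.exp (t * (g a - μ))) := by
      intro a
      rw [show t * g a = t * μ + t * (g a - μ) by ring, Real.exp_add]; ring
    have h2 : ∑ a, p a * Real.exp (t * (g a - μ)) ≤ Real.exp (t^2 * B^2) := by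
      have h3 : ∀ a ∈ Finset.univ, p a * Real.exp (t * (g a - μ))
          ≤ p a * (t * (g a - μ) + Real.exp (t^2 * B^2)) := by
        intro a _
        apply mul_le_mul_of_nonneg_left _ (hp a)
        have h4 := exp_le_add_exp_sq (t * (g a - μ))
        have h5 : (t * (g a - μ))^2 ≤ t^2 * B^2 := by
          have := hg a
          have h6 : (g a - μ)^2 ≤ B^2 := sq_le_sq' (by linarith [(abs_le.1 this).1]) (abs_le.1 this).2
          calc (t * (g a - μ))^2 = t^2 * (g a - μ)^2 := by ring
          _ ≤ t^2 * B^2 := by nlinarith [sq_nonneg t]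
        have := Real.exp_le_exp.2 h5
        linarith
      calc ∑ a, p a * Real.exp (t * (g a - μ))
          ≤ ∑ a, p a * (t * (g a - μ) + Real.exp (t^2 * B^2)) := Finset.sum_le_sum h3
        _ = ∑ a, (t * (p a * g a) - t * μ * p a + p a * Real.exp (t^2*B^2)) :=
            Finset.sum_congr rfl (fun a _ => by ring)
        _ = t * (∑ a, p a * g a) - t * μ * (∑ a, p a) + (∑ a, p a) * Real.exp (t^2*B^2) := by
            rw [Finset.sum_add_distrib, Finset.sum_sub_distrib, ← Finset.mul_sum,
              ← Finset.mul_sum, ← Finset.sum_mul]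
        _ = Real.exp (t^2 * B^2) := by rw [hps, ← hμ]; ring
    calc ∑ a, p a * Real.exp (t * g a)
        = Real.exp (t * μ) * ∑ a, p a * Real.exp (t * (g a - μ)) := by
          rw [Finset.mul_sum]; exact Finset.sum_congr rfl (fun a _ => h1 a)
      _ ≤ Real.exp (t * μ) * Real.exp (t^2 * B^2) :=
          mul_le_mul_of_nonneg_left h2 (Real.exp_pos _).le
      _ = Real.exp (t * μ + t^2 * B^2) := (Real.exp_add _ _).symm
  calc Real.log (∑ a, p a * Real.exp (t * g a))
      ≤ Real.log (Real.exp (t * μ + t^2 * B^2)) := Real.log_le_log hpos key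
    _ = t * μ + t^2 * B^2 := Real.log_exp _

lemma md_regret {A : Type} [Fintype A] [Nonempty A]
    (η Hr : ℝ) (K : ℕ) (q : ℕ → A → ℝ) (w : ℕ → A → ℝ) (pst : A → ℝ)
    (hη : 0 < η) (hH : 0 ≤ Hr)
    (hw0 : ∀ a, w 0 a = 1 / (Fintype.card A : ℝ))
    (hupd : ∀ k a, w (k+1) a =
      w k a * Real.exp (η * q k a) / ∑ b, w k b * Real.exp (η * q k b))
    (hq : ∀ k a, 0 ≤ q k a ∧ q k a ≤ Hr)
    (hp : ∀ a, 0 ≤ pst a) (hps : ∑ a, pst a = 1) :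
    ∑ k ∈ Finset.range K, ∑ a, (pst a - w k a) * q k a
      ≤ Real.log (Fintype.card A) / η + η * K * Hr^2 := by
  have hcard : 0 < (Fintype.card A : ℝ) := by
    exact_mod_cast Fintype.card_pos
  -- each w k is a positive probability vector
  have hwpos : ∀ k, (∀ a, 0 < w k a) ∧ (∑ a, w k a) = 1 := by
    intro k
    induction k with
    | zero =>
      constructor
      · intro a; rw [hw0]; positivity
      · simp only [hw0]
        rw [Finset.sum_const, Finset.card_univ, nsmul_eq_mul]
        field_simp
    | succ k ih =>
      have hZ : 0 < ∑ b, w k b * Real.exp (η * q k b) :=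
        Finset.sum_pos (fun b _ => mul_pos (ih.1 b) (Real.exp_pos _)) Finset.univ_nonempty
      constructor
      · intro a; rw [hupd]; exact div_pos (mul_pos (ih.1 a) (Real.exp_pos _)) hZ
      · simp only [hupd]
        rw [← Finset.sum_div, div_self hZ.ne']
  set KL : ℕ → ℝ := fun k => ∑ a, pst a * Real.log (pst a / w k a) with hKL
  -- one-step inequality
  have hstep : ∀ k, η * ∑ a, (pst a - w k a) * q k a ≤ KL k - KL (k+1) + η^2 * Hr^2 := by
    intro k
    set Z := ∑ b, w k b * Real.exp (η * q k b) with hZdef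
    have hZ : 0 < Z :=
      Finset.sum_pos (fun b _ => mul_pos ((hwpos k).1 b) (Real.exp_pos _)) Finset.univ_nonempty
    have hlogw : ∀ a, Real.log (w (k+1) a) = Real.log (w k a) + η * q k a - Real.log Z := by
      intro a
      rw [hupd, ← hZdef, Real.log_div (mul_pos ((hwpos k).1 a) (Real.exp_pos _)).ne' hZ.ne',
        Real.log_mul ((hwpos k).1 a).ne' (Real.exp_pos _).ne', Real.log_exp]
    -- KL (k+1) - KL k = log Z - η ⟨pst, q k⟩
    have hKLdiff : KL (k+1) - KL k = Real.log Z - η * ∑ a, pst a * q k a := by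
      have h1 : ∀ a, pst a * Real.log (pst a / w (k+1) a)
          - pst a * Real.log (pst a / w k a) = pst a * (Real.log Z - η * q k a) := by
        intro a
        rcases eq_or_lt_of_le (hp a) with h0 | h0
        · rw [← h0]; ring
        · rw [Real.log_div h0.ne' ((hwpos (k+1)).1 a).ne',
            Real.log_div h0.ne' ((hwpos k).1 a).ne', hlogw a]
          ring
      simp only [hKL]
      rw [← Finset.sum_sub_distrib]
      rw [Finset.sum_congr rfl (fun a _ => h1 a)]
      rw [show (∑ a, pst a * (Real.log Z - η * q k a)) =
        (∑ a, pst a) * Real.log Z - η * ∑ a, pst a * q k a from by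
          rw [Finset.mul_sum, Finset.sum_mul, ← Finset.sum_sub_distrib]
          exact Finset.sum_congr rfl (fun a _ => by ring), hps]
      ring
    -- bound log Z by Hoeffding-type lemma
    have hmean_lb : 0 ≤ ∑ b, w k b * q k b :=
      Finset.sum_nonneg (fun b _ => mul_nonneg ((hwpos k).1 b).le (hq k b).1)
    have hmean_ub : ∑ b, w k b * q k b ≤ Hr := by
      calc ∑ b, w k b * q k b ≤ ∑ b, w k b * Hr :=
          Finset.sum_le_sum (fun b _ => mul_le_mul_of_nonneg_left (hq k b).2 ((hwpos k).1 b).le)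
        _ = Hr := by rw [← Finset.sum_mul, (hwpos k).2, one_mul]
    have hlogZ : Real.log Z ≤ η * (∑ b, w k b * q k b) + η^2 * Hr^2 := by
      apply log_expsum_le (w k) (q k) η Hr (fun a => ((hwpos k).1 a).le) (hwpos k).2
      intro a
      rw [abs_le]
      constructor
      · have := (hq k a).1; linarith
      · have := (hq k a).2; linarith
    have hexp : ∑ a, (pst a - w k a) * q k a
        = (∑ a, pst a * q k a) - ∑ a, w k a * q k a := by
      rw [← Finset.sum_sub_distrib]
      exact Finset.sum_congr rfl (fun a _ => by ring)
    rw [hexp]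
    nlinarith [hKLdiff, hlogZ]
  -- telescoping sum
  have htel : ∑ k ∈ Finset.range K, (KL k - KL (k+1)) = KL 0 - KL K :=
    Finset.sum_range_sub' KL K
  have hKL0 : KL 0 ≤ Real.log (Fintype.card A) := by
    have h1 : ∀ a ∈ Finset.univ, pst a * Real.log (pst a / w 0 a)
        ≤ pst a * Real.log (Fintype.card A) := by
      intro a _
      rcases eq_or_lt_of_le (hp a) with h0 | h0
      · rw [← h0]; simp
      · apply mul_le_mul_of_nonneg_left _ h0.le
        rw [hw0, div_div_eq_mul_div, div_one, Real.log_mul h0.ne' hcard.ne']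
        have hle1 : pst a ≤ 1 := by
          rw [← hps]
          exact Finset.single_le_sum (fun b _ => hp b) (Finset.mem_univ a)
        have := Real.log_nonpos h0.le hle1
        linarith
    calc KL 0 ≤ ∑ a, pst a * Real.log (Fintype.card A) := Finset.sum_le_sum h1
      _ = Real.log (Fintype.card A) := by rw [← Finset.sum_mul, hps, one_mul]
  have hKLK : 0 ≤ KL K := by
    have h1 : ∀ a ∈ Finset.univ, pst a - w K a ≤ pst a * Real.log (pst a / w K a) := by
      intro a _
      rcases eq_or_lt_of_le (hp a) with h0 | h0
      · rw [← h0]; simp [((hwpos K).1 a).le]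
      · have hlog : Real.log (w K a / pst a) ≤ w K a / pst a - 1 :=
          Real.log_le_sub_one_of_pos (div_pos ((hwpos K).1 a) h0)
        have heq : Real.log (pst a / w K a) = - Real.log (w K a / pst a) := by
          rw [← Real.log_inv, inv_div]
        have h2 : 1 - w K a / pst a ≤ Real.log (pst a / w K a) := by rw [heq]; linarith
        calc pst a - w K a = pst a * (1 - w K a / pst a) := by field_simp
          _ ≤ pst a * Real.log (pst a / w K a) := mul_le_mul_of_nonneg_left h2 h0.le
    calc (0:ℝ) = (∑ a, pst a) - ∑ a, w K a := by rw [hps, (hwpos K).2]; ring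
      _ = ∑ a, (pst a - w K a) := (Finset.sum_sub_distrib _ _).symm
      _ ≤ KL K := Finset.sum_le_sum h1
  have hmain : η * ∑ k ∈ Finset.range K, ∑ a, (pst a - w k a) * q k a
      ≤ Real.log (Fintype.card A) + η^2 * K * Hr^2 := by
    calc η * ∑ k ∈ Finset.range K, ∑ a, (pst a - w k a) * q k a
        = ∑ k ∈ Finset.range K, η * ∑ a, (pst a - w k a) * q k a := Finset.mul_sum _ _ _
      _ ≤ ∑ k ∈ Finset.range K, (KL k - KL (k+1) + η^2 * Hr^2) :=
          Finset.sum_le_sum (fun k _ => hstep k)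
      _ = (KL 0 - KL K) + K * (η^2 * Hr^2) := by
          rw [Finset.sum_add_distrib, htel, Finset.sum_const, Finset.card_range, nsmul_eq_mul]
      _ ≤ Real.log (Fintype.card A) + η^2 * K * Hr^2 := by nlinarith
  have hfin : Real.log (Fintype.card A) / η + η * K * Hr^2
      = (Real.log (Fintype.card A) + η^2 * K * Hr^2) / η := by field_simp
  rw [hfin, le_div_iff₀ hη]
  nlinarith

/-- **Theorem 1 (deterministic core of the Optimistic NPG guarantee).**
Steps are 0-based: `h ∈ {0,…,H-1}` and iterations `k ∈ {0,…,K-1}`; `Q̄^k_H ≡ 0`. -/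
theorem optimistic_npg_core :
    ∃ C : ℝ, 0 < C ∧
      ∀ (S A : Type) [Fintype S] [Fintype A] [DecidableEq S] [Nonempty S] [Nonempty A]
        (P : ℕ → S → A → S → ℝ) (R : ℕ → S → A → ℝ) (H : ℕ) (s₁ : S)
        (η : ℝ) (K : ℕ) (ε' : ℝ)
        (Qbar : ℕ → ℕ → S → A → ℝ) (π : ℕ → ℕ → S → A → ℝ),
        IsKernel H P → IsReward H R → 0 < η → 0 ≤ ε' →
        -- the Q̄'s take values in [0,H], with Q̄^k_H ≡ 0
        (∀ k h, h < H → ∀ s a, 0 ≤ Qbar k h s a ∧ Qbar k h s a ≤ H) →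
        (∀ k s a, Qbar k H s a = 0) →
        -- π⁰ is the uniform policy and π^{k+1} is the mirror-ascent update of π^k
        (∀ h s a, π 0 h s a = 1 / (Fintype.card A : ℝ)) →
        (∀ k h s a, π (k+1) h s a =
          π k h s a * Real.exp (η * Qbar k h s a) /
            ∑ a', π k h s a' * Real.exp (η * Qbar k h s a')) →
        -- optimism: Q̄^k_h ≥ T_h^{π^k} Q̄^k_{h+1}
        (∀ k < K, ∀ h < H, ∀ (s : S) (a : A),
          Bellman P R (π k) h (Qbar k (h+1)) s a ≤ Qbar k h s a) →
        -- consistency: V̄^k_1(s₁) - V^{π^k}_1(s₁) ≤ ε'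
        (∀ k < K, (∑ a, π k 0 s₁ a * Qbar k 0 s₁ a) - Val P R H (π k) 0 s₁ ≤ ε') →
        -- conclusion, stated for every comparator policy (in particular the optimal one)
        ∀ πstar : ℕ → S → A → ℝ, IsPolicy H πstar →
          (1 / (K : ℝ)) *
              ∑ k ∈ Finset.range K, (Val P R H πstar 0 s₁ - Val P R H (π k) 0 s₁)
            ≤ C * ((H : ℝ) * Real.log (Fintype.card A) / (η * K) + η * (H : ℝ) ^ 3) + ε' := by
  refine ⟨1, one_pos, ?_⟩
  intro S A _ _ _ _ _ P R H s₁ η K ε' Qbar π hP hR hη hε hQb hQH hπ0 hπupd hopt hcons πstar hπstar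
  rcases Nat.eq_zero_or_pos K with rfl | hK
  · have h1 : (0:ℝ) ≤ η * (H:ℝ)^3 := by positivity
    simp only [Nat.cast_zero, mul_zero, div_zero, Finset.range_zero, Finset.sum_empty,
      one_div, zero_add, one_mul]
    simp
    linarith
  -- properties of the visitation distribution of πstar
  have hvis : ∀ h, h ≤ H →
      (∀ s, 0 ≤ visit P πstar s₁ h s) ∧ (∑ s, visit P πstar s₁ h s) = 1 := by
    intro h
    induction h with
    | zero =>
      intro _
      constructor
      · intro s
        simp only [visit]
        split <;> norm_num
      · simp [visit]
    | succ h ih =>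
      intro hh
      have hhH : h < H := hh
      obtain ⟨hnn, hsum⟩ := ih (by omega)
      constructor
      · intro s'
        simp only [visit]
        apply Finset.sum_nonneg; intro s _
        apply Finset.sum_nonneg; intro a _
        exact mul_nonneg (mul_nonneg (hnn s) ((hπstar h hhH s).1 a)) ((hP h hhH s a).1 s')
      · simp only [visit]
        rw [Finset.sum_comm]
        have e1 : ∀ s, ∑ s', ∑ a, visit P πstar s₁ h s * πstar h s a * P h s a s'
            = visit P πstar s₁ h s := by
          intro s
          rw [Finset.sum_comm]
          have e2 : ∀ a, ∑ s', visit P πstar s₁ h s * πstar h s a * P h s a s'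
              = visit P πstar s₁ h s * πstar h s a := by
            intro a
            rw [← Finset.mul_sum, (hP h hhH s a).2, mul_one]
          rw [Finset.sum_congr rfl (fun a _ => e2 a), ← Finset.mul_sum,
            (hπstar h hhH s).2, mul_one]
        rw [Finset.sum_congr rfl (fun s _ => e1 s), hsum]
  -- value-difference induction
  have hvd : ∀ k, k < K → ∀ t h, h + t = H →
      ∑ s, visit P πstar s₁ h s *
          (Vaux P R πstar t h s - ∑ a, π k h s a * Qbar k h s a)
        ≤ ∑ j ∈ Finset.Ico h H, ∑ s, visit P πstar s₁ j s *
            ∑ a, (πstar j s a - π k j s a) * Qbar k j s a := by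
    intro k hkK t
    induction t with
    | zero =>
      intro h hh
      have hhH : h = H := by omega
      subst hhH
      simp [Vaux, hQH]
    | succ t ih =>
      intro h hh
      have hhH : h < H := by omega
      have hμ : ∀ s, 0 ≤ visit P πstar s₁ h s := (hvis h (by omega)).1
      have hdec : ∀ s, Vaux P R πstar (t+1) h s - ∑ a, π k h s a * Qbar k h s a
          = ((∑ a, πstar h s a * Bellman P R (π k) h (Qbar k (h+1)) s a)
              - ∑ a, π k h s a * Qbar k h s a)
            + ∑ a, πstar h s a * ∑ s', P h s a s' *
                (Vaux P R πstar t (h+1) s'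
                  - ∑ a', π k (h+1) s' a' * Qbar k (h+1) s' a') := by
        intro s
        have expand : Vaux P R πstar (t+1) h s
            = ∑ a, πstar h s a *
                (R h s a + ∑ s', P h s a s' * Vaux P R πstar t (h+1) s') := by
          simp [Vaux]
        have h1 : ∀ a, ∑ s', P h s a s' * Vaux P R πstar t (h+1) s'
            = (∑ s', P h s a s' * ∑ a', π k (h+1) s' a' * Qbar k (h+1) s' a')
              + ∑ s', P h s a s' * (Vaux P R πstar t (h+1) s'
                  - ∑ a', π k (h+1) s' a' * Qbar k (h+1) s' a') := by
          intro a
          rw [← Finset.sum_add_distrib]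
          exact Finset.sum_congr rfl (fun s' _ => by ring)
        have h2 : ∀ a, πstar h s a *
              (R h s a + ∑ s', P h s a s' * Vaux P R πstar t (h+1) s')
            = πstar h s a * Bellman P R (π k) h (Qbar k (h+1)) s a
              + πstar h s a * ∑ s', P h s a s' * (Vaux P R πstar t (h+1) s'
                  - ∑ a', π k (h+1) s' a' * Qbar k (h+1) s' a') := by
          intro a
          simp only [Bellman]
          rw [h1 a]
          ring
        rw [expand, Finset.sum_congr rfl (fun a _ => h2 a), Finset.sum_add_distrib]
        ring
      have hsplit : ∑ s, visit P πstar s₁ h s *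
            (Vaux P R πstar (t+1) h s - ∑ a, π k h s a * Qbar k h s a)
          = (∑ s, visit P πstar s₁ h s *
              ((∑ a, πstar h s a * Bellman P R (π k) h (Qbar k (h+1)) s a)
                - ∑ a, π k h s a * Qbar k h s a))
            + ∑ s, visit P πstar s₁ h s * ∑ a, πstar h s a * ∑ s', P h s a s' *
                (Vaux P R πstar t (h+1) s'
                  - ∑ a', π k (h+1) s' a' * Qbar k (h+1) s' a') := by
        rw [← Finset.sum_add_distrib]
        exact Finset.sum_congr rfl (fun s _ => by rw [hdec s]; ring)
      have hT1 : ∑ s, visit P πstar s₁ h s *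
            ((∑ a, πstar h s a * Bellman P R (π k) h (Qbar k (h+1)) s a)
              - ∑ a, π k h s a * Qbar k h s a)
          ≤ ∑ s, visit P πstar s₁ h s *
              ∑ a, (πstar h s a - π k h s a) * Qbar k h s a := by
        apply Finset.sum_le_sum
        intro s _
        apply mul_le_mul_of_nonneg_left _ (hμ s)
        have hA : ∑ a, πstar h s a * Bellman P R (π k) h (Qbar k (h+1)) s a
            ≤ ∑ a, πstar h s a * Qbar k h s a :=
          Finset.sum_le_sum (fun a _ =>
            mul_le_mul_of_nonneg_left (hopt k hkK h hhH s a) ((hπstar h hhH s).1 a))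
        have hB : ∑ a, (πstar h s a - π k h s a) * Qbar k h s a
            = (∑ a, πstar h s a * Qbar k h s a) - ∑ a, π k h s a * Qbar k h s a := by
          rw [← Finset.sum_sub_distrib]
          exact Finset.sum_congr rfl (fun a _ => by ring)
        linarith
      have hT2 : ∑ s, visit P πstar s₁ h s * ∑ a, πstar h s a * ∑ s', P h s a s' *
            (Vaux P R πstar t (h+1) s'
              - ∑ a', π k (h+1) s' a' * Qbar k (h+1) s' a')
          = ∑ s', visit P πstar s₁ (h+1) s' *
              (Vaux P R πstar t (h+1) s'
                - ∑ a', π k (h+1) s' a' * Qbar k (h+1) s' a') := by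
        have hv : ∀ s' : S, visit P πstar s₁ (h+1) s'
            = ∑ s, ∑ a, visit P πstar s₁ h s * πstar h s a * P h s a s' := by
          intro s'; simp [visit]
        have e1 : ∑ s, visit P πstar s₁ h s * ∑ a, πstar h s a * ∑ s', P h s a s' *
              (Vaux P R πstar t (h+1) s'
                - ∑ a', π k (h+1) s' a' * Qbar k (h+1) s' a')
            = ∑ s, ∑ a, ∑ s', visit P πstar s₁ h s * πstar h s a * P h s a s' *
                (Vaux P R πstar t (h+1) s'
                  - ∑ a', π k (h+1) s' a' * Qbar k (h+1) s' a') := by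
          apply Finset.sum_congr rfl; intro s _
          rw [Finset.mul_sum]
          apply Finset.sum_congr rfl; intro a _
          rw [← mul_assoc, Finset.mul_sum]
          exact Finset.sum_congr rfl (fun s' _ => by ring)
        have e2 : ∑ s', visit P πstar s₁ (h+1) s' *
              (Vaux P R πstar t (h+1) s'
                - ∑ a', π k (h+1) s' a' * Qbar k (h+1) s' a')
            = ∑ s', ∑ s, ∑ a, visit P πstar s₁ h s * πstar h s a * P h s a s' *
                (Vaux P R πstar t (h+1) s'
                  - ∑ a', π k (h+1) s' a' * Qbar k (h+1) s' a') := by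
          apply Finset.sum_congr rfl; intro s' _
          rw [hv s', Finset.sum_mul]
          apply Finset.sum_congr rfl; intro s _
          rw [Finset.sum_mul]
        rw [e1, e2]
        rw [Finset.sum_congr rfl (fun s (_ : s ∈ Finset.univ) =>
          (Finset.sum_comm : _ = ∑ s' : S, ∑ a : A, visit P πstar s₁ h s * πstar h s a *
            P h s a s' * (Vaux P R πstar t (h+1) s'
              - ∑ a', π k (h+1) s' a' * Qbar k (h+1) s' a')))]
        exact Finset.sum_comm
      have hih := ih (h+1) (by omega)
      calc ∑ s, visit P πstar s₁ h s *
            (Vaux P R πstar (t+1) h s - ∑ a, π k h s a * Qbar k h s a)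
          ≤ (∑ s, visit P πstar s₁ h s *
              ∑ a, (πstar h s a - π k h s a) * Qbar k h s a)
            + ∑ j ∈ Finset.Ico (h+1) H, ∑ s, visit P πstar s₁ j s *
                ∑ a, (πstar j s a - π k j s a) * Qbar k j s a := by
            rw [hsplit, hT2]
            linarith
        _ = ∑ j ∈ Finset.Ico h H, ∑ s, visit P πstar s₁ j s *
              ∑ a, (πstar j s a - π k j s a) * Qbar k j s a :=
            (Finset.sum_eq_sum_Ico_succ_bot hhH (fun j => ∑ s, visit P πstar s₁ j s *
              ∑ a, (πstar j s a - π k j s a) * Qbar k j s a)).symm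
  -- per-iteration bound
  have hper : ∀ k ∈ Finset.range K,
      Val P R H πstar 0 s₁ - Val P R H (π k) 0 s₁
        ≤ (∑ j ∈ Finset.range H, ∑ s, visit P πstar s₁ j s *
            ∑ a, (πstar j s a - π k j s a) * Qbar k j s a) + ε' := by
    intro k hk
    rw [Finset.mem_range] at hk
    have h1 := hvd k hk H 0 (by omega)
    have hval : Val P R H πstar 0 s₁ = Vaux P R πstar H 0 s₁ := by simp [Val]
    have h2 := hcons k hk
    have hδ : ∑ s, visit P πstar s₁ 0 s *
          (Vaux P R πstar H 0 s - ∑ a, π k 0 s a * Qbar k 0 s a)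
        = Vaux P R πstar H 0 s₁ - ∑ a, π k 0 s₁ a * Qbar k 0 s₁ a := by
      simp [visit]
    rw [hδ] at h1
    rw [Finset.range_eq_Ico]
    linarith
  -- regret bound for each (h, s)
  have hmd : ∀ h, h < H → ∀ s : S,
      ∑ k ∈ Finset.range K, ∑ a, (πstar h s a - π k h s a) * Qbar k h s a
        ≤ Real.log (Fintype.card A) / η + η * K * (H:ℝ)^2 := by
    intro h hh s
    exact md_regret η (H:ℝ) K (fun k a => Qbar k h s a) (fun k a => π k h s a)
      (πstar h s) hη (Nat.cast_nonneg H) (fun a => hπ0 h s a)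
      (fun k a => hπupd k h s a) (fun k a => hQb k h hh s a)
      (hπstar h hh s).1 (hπstar h hh s).2
  have hB : ∀ h ∈ Finset.range H,
      ∑ k ∈ Finset.range K, ∑ s, visit P πstar s₁ h s *
          ∑ a, (πstar h s a - π k h s a) * Qbar k h s a
        ≤ Real.log (Fintype.card A) / η + η * K * (H:ℝ)^2 := by
    intro h hh
    rw [Finset.mem_range] at hh
    rw [Finset.sum_comm]
    calc ∑ s, ∑ k ∈ Finset.range K, visit P πstar s₁ h s *
            ∑ a, (πstar h s a - π k h s a) * Qbar k h s a
        = ∑ s, visit P πstar s₁ h s * ∑ k ∈ Finset.range K,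
            ∑ a, (πstar h s a - π k h s a) * Qbar k h s a :=
          Finset.sum_congr rfl (fun s _ => (Finset.mul_sum _ _ _).symm)
      _ ≤ ∑ s, visit P πstar s₁ h s *
            (Real.log (Fintype.card A) / η + η * K * (H:ℝ)^2) :=
          Finset.sum_le_sum (fun s _ => mul_le_mul_of_nonneg_left (hmd h hh s)
            ((hvis h hh.le).1 s))
      _ = Real.log (Fintype.card A) / η + η * K * (H:ℝ)^2 := by
          rw [← Finset.sum_mul, (hvis h hh.le).2, one_mul]
  have htot : ∑ k ∈ Finset.range K, (Val P R H πstar 0 s₁ - Val P R H (π k) 0 s₁)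
      ≤ (H:ℝ) * (Real.log (Fintype.card A) / η + η * K * (H:ℝ)^2) + K * ε' := by
    calc ∑ k ∈ Finset.range K, (Val P R H πstar 0 s₁ - Val P R H (π k) 0 s₁)
        ≤ ∑ k ∈ Finset.range K, ((∑ j ∈ Finset.range H, ∑ s, visit P πstar s₁ j s *
            ∑ a, (πstar j s a - π k j s a) * Qbar k j s a) + ε') :=
          Finset.sum_le_sum hper
      _ = (∑ k ∈ Finset.range K, ∑ j ∈ Finset.range H, ∑ s, visit P πstar s₁ j s *
            ∑ a, (πstar j s a - π k j s a) * Qbar k j s a) + K * ε' := by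
          rw [Finset.sum_add_distrib, Finset.sum_const, Finset.card_range, nsmul_eq_mul]
      _ = (∑ j ∈ Finset.range H, ∑ k ∈ Finset.range K, ∑ s, visit P πstar s₁ j s *
            ∑ a, (πstar j s a - π k j s a) * Qbar k j s a) + K * ε' := by
          rw [Finset.sum_comm]
      _ ≤ (∑ _j ∈ Finset.range H,
            (Real.log (Fintype.card A) / η + η * K * (H:ℝ)^2)) + K * ε' :=
          add_le_add_left (Finset.sum_le_sum hB) _
      _ = (H:ℝ) * (Real.log (Fintype.card A) / η + η * K * (H:ℝ)^2) + K * ε' := by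
          rw [Finset.sum_const, Finset.card_range, nsmul_eq_mul]
  have hKpos : (0:ℝ) < (K:ℝ) := by exact_mod_cast hK
  have hle := mul_le_mul_of_nonneg_left htot (by positivity : (0:ℝ) ≤ 1/(K:ℝ))
  have heq : (1/(K:ℝ)) * ((H:ℝ) * (Real.log (Fintype.card A) / η + η * K * (H:ℝ)^2) + K * ε')
      = 1 * ((H:ℝ) * Real.log (Fintype.card A) / (η * K) + η * (H:ℝ)^3) + ε' := by
    field_simp
  linarith
end

section
/- Lemma 1 (generalized policy-difference lemma). Let (S, A, P, R, H) be an episodic MDP with initial state s₁. Let π and π̃ be any two policies and let Q̄_h : S×A → ℝ, h ∈ {1,…,H}, be arbitrary functions with Q̄_{H+1} ≡ 0, and define V̄_1(s₁) := Σ_{a∈A} π̃_1(a|s₁) Q̄_1(s₁,a). Then V_1^π(s₁) − V̄_1(s₁) = Σ_{h=1}^H E_{s_h∼π}[ Σ_{a∈A} (π_h(a|s_h) − π̃_h(a|s_h)) Q̄_h(s_h,a) ] − Σ_{h=1}^H E_{(s_h,a_h)∼π}[ Q̄_h(s_h,a_h) − (T_h^{π̃} Q̄_{h+1})(s_h,a_h)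 ]. -/
open Finset

/-!
Let `G h` be the `π`-expected gap, under the law of `s_h`, between `V_h^π` and the
`π̃`-average of `Q̄_h`. One Bellman step shows that `G h - G (h+1)` is exactly the `h`-th
summand of the right-hand side, so the identity is the telescoping of `G 0 - G H`, where
`G 0` is the left-hand side and `G H = 0` because `V_H^π = 0` and `Q̄_H = 0`.
-/

section PolicyDifference

variable {S A : Type} [Fintype S] [Fintype A]
  (P : ℕ → S → A → S → ℝ) (R : ℕ → S → A → ℝ) (H : ℕ) (π πt : ℕ → S → A → ℝ)
  (Qbar : ℕ → S → A → ℝ)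

theorem Val_self (s : S) : Val P R H π H s = 0 := by
  simp [Val, Vaux]

theorem Val_of_lt {h : ℕ} (hh : h < H) (s : S) :
    Val P R H π h s
      = ∑ a, π h s a * (R h s a + ∑ s', P h s a s' * Val P R H π (h + 1) s') := by
  have hsucc : H - h = (H - (h + 1)) + 1 := by omega
  simp only [Val, hsucc, Vaux]

noncomputable def valueGap (h : ℕ) (s : S) : ℝ :=
  Val P R H π h s - ∑ a, πt h s a * Qbar h s a

theorem valueGap_of_lt {h : ℕ} (hh : h < H) (s : S) :
    valueGap P R H π πt Qbar h s
      = ∑ a, (π h s a - πt h s a) * Qbar h s a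
        - ∑ a, π h s a * (Qbar h s a - Bellman P R πt h (Qbar (h + 1)) s a)
        + ∑ a, π h s a * ∑ s', P h s a s' * valueGap P R H π πt Qbar (h + 1) s' := by
  simp only [valueGap, Val_of_lt P R H π hh, Bellman, mul_sub, mul_add, sub_mul,
    Finset.mul_sum, Finset.sum_add_distrib, Finset.sum_sub_distrib]
  ring

variable [DecidableEq S] (s₁ : S)

theorem sum_visit_zero_mul (f : S → ℝ) : ∑ s, visit P π s₁ 0 s * f s = f s₁ := by
  simp [visit]

theorem sum_visit_succ_mul (h : ℕ) (f : S → ℝ) :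
    ∑ s', visit P π s₁ (h + 1) s' * f s'
      = ∑ s, visit P π s₁ h s * ∑ a, π h s a * ∑ s', P h s a s' * f s' := by
  simp only [visit, Finset.sum_mul, Finset.mul_sum, mul_assoc]
  rw [Finset.sum_comm]
  exact Finset.sum_congr rfl fun s _ => Finset.sum_comm

theorem expected_valueGap_of_lt {h : ℕ} (hh : h < H) :
    ∑ s, visit P π s₁ h s * valueGap P R H π πt Qbar h s
      = ∑ s, visit P π s₁ h s * ∑ a, (π h s a - πt h s a) * Qbar h s a
        - Epi P π s₁ h (fun s a => Qbar h s a - Bellman P R πt h (Qbar (h + 1)) s a)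
        + ∑ s', visit P π s₁ (h + 1) s' * valueGap P R H π πt Qbar (h + 1) s' := by
  simp only [sum_visit_succ_mul, Epi, valueGap_of_lt P R H π πt Qbar hh, mul_add, mul_sub,
    Finset.sum_add_distrib, Finset.sum_sub_distrib, Finset.mul_sum, mul_assoc]

end PolicyDifference

theorem generalized_policy_difference_general
    (S A : Type) [Fintype S] [Fintype A] [DecidableEq S]
    (P : ℕ → S → A → S → ℝ) (R : ℕ → S → A → ℝ) (H : ℕ) (s₁ : S)
    (π πt : ℕ → S → A → ℝ) (Qbar : ℕ → S → A → ℝ)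
    (hQH : ∀ s a, Qbar H s a = 0) :
    Val P R H π 0 s₁ - (∑ a, πt 0 s₁ a * Qbar 0 s₁ a)
      = (∑ h ∈ Finset.range H, ∑ s, visit P π s₁ h s *
            ∑ a, (π h s a - πt h s a) * Qbar h s a)
        - ∑ h ∈ Finset.range H,
            Epi P π s₁ h (fun s a => Qbar h s a - Bellman P R πt h (Qbar (h+1)) s a) := by
  set G : ℕ → ℝ := fun h => ∑ s, visit P π s₁ h s * valueGap P R H π πt Qbar h s
  have hG0 : G 0 = Val P R H π 0 s₁ - ∑ a, πt 0 s₁ a * Qbar 0 s₁ a :=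
    sum_visit_zero_mul P π s₁ _
  have hGH : G H = 0 := by simp [G, valueGap, Val_self, hQH]
  rw [← hG0, ← sub_zero (G 0), ← hGH, ← Finset.sum_range_sub', ← Finset.sum_sub_distrib]
  refine Finset.sum_congr rfl fun h hh => ?_
  simp only [G, expected_valueGap_of_lt P R H π πt Qbar s₁ (Finset.mem_range.1 hh)]
  ring

/-- **Lemma 1 (generalized policy-difference lemma).** Steps are 0-based
(`h ∈ {0,…,H-1}`), and `Q̄_H ≡ 0`. -/
theorem generalized_policy_difference
    (S A : Type) [Fintype S] [Fintype A] [DecidableEq S] [Nonempty S] [Nonempty A]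
    (P : ℕ → S → A → S → ℝ) (R : ℕ → S → A → ℝ) (H : ℕ) (s₁ : S)
    (π πt : ℕ → S → A → ℝ) (Qbar : ℕ → S → A → ℝ)
    (hP : IsKernel H P) (hR : IsReward H R)
    (hπ : IsPolicy H π) (hπt : IsPolicy H πt)
    (hQH : ∀ s a, Qbar H s a = 0) :
    Val P R H π 0 s₁ - (∑ a, πt 0 s₁ a * Qbar 0 s₁ a)
      = (∑ h ∈ Finset.range H, ∑ s, visit P π s₁ h s *
            ∑ a, (π h s a - πt h s a) * Qbar h s a)
        - ∑ h ∈ Finset.range H,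
            Epi P π s₁ h (fun s a => Qbar h s a - Bellman P R πt h (Qbar (h+1)) s a) :=
  generalized_policy_difference_general S A P R H s₁ π πt Qbar hQH
end

section
/- Lemma 6 (trajectory-probability stability under softmax perturbation). Let (S, A, P, R, H) be an episodic MDP. Let π be a policy and let L_h : S×A → [−1/H, 1/H] for each h ∈ {1,…,H}, and define the perturbed policy π̂ by π̂_h(a|s) = π_h(a|s)·exp(L_h(s,a)) / Σ_{a'∈A} π_h(a'|s)·exp(L_h(s,a')). Then for every trajectory τ_H = (s_1,a_1,…,s_H,a_H) ∈ (S×A)^H one has ∏_{h=1}^H π̂_h(a_h|s_h) ≤ e² · ∏_{h=1}^H π_h(a_h|s_h), and consequently ℙ^{π̂}(τ_H) ≤ e² · ℙ^{π}(τ_H). -/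
/-- Probability of the trajectory `(st 0, ac 0, …, st (H-1), ac (H-1))` under policy `π`
(steps 0-based), for trajectories starting at the fixed initial state `s₁`. -/
noncomputable def trajProb {S A : Type} [Fintype S] [Fintype A] [DecidableEq S]
    (P : ℕ → S → A → S → ℝ) (π : ℕ → S → A → ℝ) (s₁ : S) (H : ℕ)
    (st : ℕ → S) (ac : ℕ → A) : ℝ :=
  (if st 0 = s₁ then 1 else 0) *
    (∏ h ∈ Finset.range (H - 1), P h (st h) (ac h) (st (h+1))) *
    ∏ h ∈ Finset.range H, π h (st h) (ac h)


/-!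
Each step of the perturbed policy reweights `π_h(·|s)` by `exp L_h(s,·) ∈ [e^{-1/H}, e^{1/H}]`,
and the normalizer, being an average of these weights, is at least `e^{-1/H}`. So
`π̂_h(a|s) ≤ e^{2/H} π_h(a|s)`, and the `H` factors of the trajectory product multiply up to
at most `e²`. The transition factors of a trajectory are the same for both policies and
nonnegative, so the bound passes to trajectory probabilities.
-/

open Finset

noncomputable def expTilt {ι : Type*} [Fintype ι] (p L : ι → ℝ) (a : ι) : ℝ :=
  p a * Real.exp (L a) / ∑ a', p a' * Real.exp (L a')

section ExpTilt

variable {ι : Type*} [Fintype ι] {p L : ι → ℝ} {c : ℝ}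

theorem exp_neg_le_sum_mul_exp (hp₀ : ∀ a, 0 ≤ p a) (hp₁ : ∑ a, p a = 1)
    (hL : ∀ a, -c ≤ L a) : Real.exp (-c) ≤ ∑ a, p a * Real.exp (L a) :=
  calc Real.exp (-c) = ∑ a, p a * Real.exp (-c) := by rw [← sum_mul, hp₁, one_mul]
    _ ≤ ∑ a, p a * Real.exp (L a) :=
      sum_le_sum fun a _ => mul_le_mul_of_nonneg_left (Real.exp_le_exp.2 (hL a)) (hp₀ a)

theorem expTilt_nonneg (hp₀ : ∀ a, 0 ≤ p a) (a : ι) : 0 ≤ expTilt p L a :=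
  div_nonneg (mul_nonneg (hp₀ a) (Real.exp_pos _).le)
    (sum_nonneg fun a' _ => mul_nonneg (hp₀ a') (Real.exp_pos _).le)

theorem expTilt_le_exp_mul (hp₀ : ∀ a, 0 ≤ p a) (hp₁ : ∑ a, p a = 1)
    (hL : ∀ a, |L a| ≤ c) (a : ι) : expTilt p L a ≤ Real.exp (2 * c) * p a := by
  have hnorm := exp_neg_le_sum_mul_exp hp₀ hp₁ fun a => neg_le_of_abs_le (hL a)
  calc expTilt p L a ≤ p a * Real.exp c / Real.exp (-c) :=
        div_le_div₀ (mul_nonneg (hp₀ a) (Real.exp_pos _).le)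
          (mul_le_mul_of_nonneg_left (Real.exp_le_exp.2 (le_of_abs_le (hL a))) (hp₀ a))
          (Real.exp_pos _) hnorm
    _ = Real.exp (2 * c) * p a := by
        rw [mul_div_assoc, ← Real.exp_sub, sub_neg_eq_add, ← two_mul, mul_comm]

end ExpTilt

theorem prod_le_exp_card_mul_prod {ι : Type*} {s : Finset ι} {f g : ι → ℝ} {c : ℝ}
    (hf : ∀ i ∈ s, 0 ≤ f i) (hfg : ∀ i ∈ s, f i ≤ Real.exp c * g i) :
    ∏ i ∈ s, f i ≤ Real.exp (#s * c) * ∏ i ∈ s, g i := by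
  refine (prod_le_prod hf hfg).trans_eq ?_
  rw [prod_mul_distrib, prod_const, ← Real.exp_nat_mul]

theorem trajProb_le_mul_of_prod_le {S A : Type} [Fintype S] [Fintype A] [DecidableEq S]
    {P : ℕ → S → A → S → ℝ} {H : ℕ} (hP : IsKernel H P) (s₁ : S)
    {π π' : ℕ → S → A → ℝ} {st : ℕ → S} {ac : ℕ → A} {C : ℝ}
    (h : ∏ h ∈ range H, π' h (st h) (ac h) ≤ C * ∏ h ∈ range H, π h (st h) (ac h)) :
    trajProb P π' s₁ H st ac ≤ C * trajProb P π s₁ H st ac := by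
  have htransition : 0 ≤ (if st 0 = s₁ then (1 : ℝ) else 0) *
      ∏ h ∈ range (H - 1), P h (st h) (ac h) (st (h + 1)) := by
    refine mul_nonneg (by split_ifs <;> norm_num) (prod_nonneg fun i hi => ?_)
    exact (hP i (by grind) _ _).1 _
  calc trajProb P π' s₁ H st ac
      ≤ (if st 0 = s₁ then (1 : ℝ) else 0) *
          (∏ h ∈ range (H - 1), P h (st h) (ac h) (st (h + 1))) *
          (C * ∏ h ∈ range H, π h (st h) (ac h)) :=
        mul_le_mul_of_nonneg_left h htransition
    _ = C * trajProb P π s₁ H st ac := by unfold trajProb; ring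

theorem trajectory_probability_stability_general
    (S A : Type) [Fintype S] [Fintype A] [DecidableEq S]
    (P : ℕ → S → A → S → ℝ) (H : ℕ) (s₁ : S)
    (π πhat : ℕ → S → A → ℝ) (L : ℕ → S → A → ℝ)
    (hP : IsKernel H P) (hπ : IsPolicy H π)
    (hL : ∀ h < H, ∀ (s : S) (a : A), |L h s a| ≤ 1 / (H : ℝ))
    (hπhat : ∀ h s a, πhat h s a =
      π h s a * Real.exp (L h s a) / ∑ a', π h s a' * Real.exp (L h s a')) :
    ∀ (st : ℕ → S) (ac : ℕ → A),
      (∏ h ∈ Finset.range H, πhat h (st h) (ac h))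
          ≤ Real.exp 2 * ∏ h ∈ Finset.range H, π h (st h) (ac h)
        ∧
      trajProb P πhat s₁ H st ac ≤ Real.exp 2 * trajProb P π s₁ H st ac := by
  intro st ac
  have hπhat_eq h s : πhat h s = expTilt (π h s) (L h s) := funext (hπhat h s)
  have hhorizon : (H : ℝ) * (2 * (1 / H)) ≤ 2 := by
    rcases eq_or_ne H 0 with rfl | hH
    · simp
    · exact (by field_simp : (H : ℝ) * (2 * (1 / H)) = 2).le
  have hstep : ∀ h ∈ range H,
      πhat h (st h) (ac h) ≤ Real.exp (2 * (1 / H)) * π h (st h) (ac h) :=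
    fun h hh => hπhat_eq h _ ▸ expTilt_le_exp_mul (hπ h (mem_range.1 hh) _).1
      (hπ h (mem_range.1 hh) _).2 (hL h (mem_range.1 hh) _) _
  have hprod : ∏ h ∈ range H, πhat h (st h) (ac h)
      ≤ Real.exp 2 * ∏ h ∈ range H, π h (st h) (ac h) :=
    calc ∏ h ∈ range H, πhat h (st h) (ac h)
        ≤ Real.exp (H * (2 * (1 / H))) * ∏ h ∈ range H, π h (st h) (ac h) := by
          simpa only [card_range] using prod_le_exp_card_mul_prod
            (fun h hh => hπhat_eq h _ ▸ expTilt_nonneg (hπ h (mem_range.1 hh) _).1 _) hstep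
      _ ≤ Real.exp 2 * ∏ h ∈ range H, π h (st h) (ac h) := by
          gcongr
          exact prod_nonneg fun h hh => (hπ h (mem_range.1 hh) _).1 _
  exact ⟨hprod, trajProb_le_mul_of_prod_le hP s₁ hprod⟩

/-- **Lemma 6 (trajectory-probability stability under softmax perturbation).**
Steps are 0-based (`h ∈ {0,…,H-1}`). -/
theorem trajectory_probability_stability
    (S A : Type) [Fintype S] [Fintype A] [DecidableEq S] [Nonempty S] [Nonempty A]
    (P : ℕ → S → A → S → ℝ) (R : ℕ → S → A → ℝ) (H : ℕ) (s₁ : S)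
    (π πhat : ℕ → S → A → ℝ) (L : ℕ → S → A → ℝ)
    (hP : IsKernel H P) (hπ : IsPolicy H π)
    (hL : ∀ h < H, ∀ (s : S) (a : A), |L h s a| ≤ 1 / (H : ℝ))
    (hπhat : ∀ h s a, πhat h s a =
      π h s a * Real.exp (L h s a) / ∑ a', π h s a' * Real.exp (L h s a')) :
    ∀ (st : ℕ → S) (ac : ℕ → A),
      (∏ h ∈ Finset.range H, πhat h (st h) (ac h))
          ≤ Real.exp 2 * ∏ h ∈ Finset.range H, π h (st h) (ac h)
        ∧
      trajProb P πhat s₁ H st ac ≤ Real.exp 2 * trajProb P π s₁ H st ac :=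
  trajectory_probability_stability_general S A P H s₁ π πhat L hP hπ hL hπhat
end

section
/- Lemma 3 (policy Lipschitzness of visitation expectations). Let (S, A, P, R, H) be an episodic MDP with initial state s₁. Let π be a policy, let G_h : S×A → [−1/H, 1/H] for each h ∈ {1,…,H}, and define the policy π' by π'_h(a|s) = π_h(a|s)·exp(G_h(s,a)) / Σ_{a'∈A} π_h(a'|s)·exp(G_h(s,a')). Then for every step h ∈ {1,…,H} and every function f : S×A → [0,∞): e^{−2} · E_π[f(s_h,a_h)] ≤ E_{π'}[f(s_h,a_h)] ≤ e² · E_π[f(s_h,a_h)]. -/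
open Finset

/-- **Lemma 3 (policy Lipschitzness of visitation expectations).**
Steps are 0-based (`h ∈ {0,…,H-1}`). -/
theorem policy_lipschitz
    (S A : Type) [Fintype S] [Fintype A] [DecidableEq S] [Nonempty S] [Nonempty A]
    (P : ℕ → S → A → S → ℝ) (R : ℕ → S → A → ℝ) (H : ℕ) (s₁ : S)
    (π π' : ℕ → S → A → ℝ) (G : ℕ → S → A → ℝ)
    (hP : IsKernel H P) (hπ : IsPolicy H π)
    (hG : ∀ h < H, ∀ (s : S) (a : A), |G h s a| ≤ 1 / (H : ℝ))
    (hπ' : ∀ h s a, π' h s a =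
      π h s a * Real.exp (G h s a) / ∑ a', π h s a' * Real.exp (G h s a')) :
    ∀ h < H, ∀ f : S → A → ℝ, (∀ s a, 0 ≤ f s a) →
      Real.exp (-2) * Epi P π s₁ h f ≤ Epi P π' s₁ h f ∧
        Epi P π' s₁ h f ≤ Real.exp 2 * Epi P π s₁ h f := by
  intro h hh f hf
  -- pointwise comparison of π' and π
  have key : ∀ k < H, ∀ s a, 0 ≤ π' k s a ∧
      Real.exp (-(2/H)) * π k s a ≤ π' k s a ∧
      π' k s a ≤ Real.exp (2/H) * π k s a := by
    intro k hk s a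
    obtain ⟨hnn, hsum⟩ := hπ k hk s
    set Z : ℝ := ∑ a', π k s a' * Real.exp (G k s a') with hZ
    have hZlb : Real.exp (-(1/H)) ≤ Z := by
      calc Real.exp (-(1/H)) = ∑ a', π k s a' * Real.exp (-(1/H)) := by
            rw [← Finset.sum_mul, hsum, one_mul]
        _ ≤ Z := by
            refine Finset.sum_le_sum fun a' _ => ?_
            exact mul_le_mul_of_nonneg_left
              (Real.exp_le_exp.2 (neg_le_of_abs_le (hG k hk s a'))) (hnn a')
    have hZub : Z ≤ Real.exp (1/H) := by
      calc Z ≤ ∑ a', π k s a' * Real.exp (1/H) := by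
            refine Finset.sum_le_sum fun a' _ => ?_
            exact mul_le_mul_of_nonneg_left
              (Real.exp_le_exp.2 (le_of_abs_le (hG k hk s a'))) (hnn a')
        _ = Real.exp (1/H) := by rw [← Finset.sum_mul, hsum, one_mul]
    have hZpos : 0 < Z := lt_of_lt_of_le (Real.exp_pos _) hZlb
    have hGlb : Real.exp (-(1/H)) ≤ Real.exp (G k s a) :=
      Real.exp_le_exp.2 (neg_le_of_abs_le (hG k hk s a))
    have hGub : Real.exp (G k s a) ≤ Real.exp (1/H) :=
      Real.exp_le_exp.2 (le_of_abs_le (hG k hk s a))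
    have hub : π' k s a ≤ Real.exp (2/H) * π k s a := by
      rw [hπ' k s a, ← hZ, div_le_iff₀ hZpos]
      calc π k s a * Real.exp (G k s a) ≤ π k s a * Real.exp (1/H) :=
            mul_le_mul_of_nonneg_left hGub (hnn a)
        _ = Real.exp (2/H) * π k s a * Real.exp (-(1/H)) := by
            have he : Real.exp (2/(H:ℝ)) * Real.exp (-(1/H)) = Real.exp (1/H) := by
              rw [← Real.exp_add]; congr 1; ring
            rw [← he]; ring
        _ ≤ Real.exp (2/H) * π k s a * Z :=
            mul_le_mul_of_nonneg_left hZlb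
              (mul_nonneg (Real.exp_pos _).le (hnn a))
    have hlb : Real.exp (-(2/H)) * π k s a ≤ π' k s a := by
      rw [hπ' k s a, ← hZ, le_div_iff₀ hZpos]
      calc Real.exp (-(2/H)) * π k s a * Z
          ≤ Real.exp (-(2/H)) * π k s a * Real.exp (1/H) :=
            mul_le_mul_of_nonneg_left hZub
              (mul_nonneg (Real.exp_pos _).le (hnn a))
        _ = π k s a * Real.exp (-(1/H)) := by
            have he : Real.exp (-(2/(H:ℝ))) * Real.exp (1/H) = Real.exp (-(1/H)) := by
              rw [← Real.exp_add]; congr 1; ring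
            rw [← he]; ring
        _ ≤ π k s a * Real.exp (G k s a) :=
            mul_le_mul_of_nonneg_left hGlb (hnn a)
    exact ⟨le_trans (mul_nonneg (Real.exp_pos _).le (hnn a)) hlb, hlb, hub⟩
  -- visitation comparison by induction
  have vb : ∀ k, k ≤ H → ∀ s, 0 ≤ visit P π s₁ k s ∧
      Real.exp (-(2*k/H)) * visit P π s₁ k s ≤ visit P π' s₁ k s ∧
      visit P π' s₁ k s ≤ Real.exp (2*k/H) * visit P π s₁ k s := by
    intro k
    induction k with
    | zero =>
      intro _ s
      simp only [visit, Nat.cast_zero, mul_zero, zero_div, neg_zero,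
        Real.exp_zero, one_mul]
      refine ⟨?_, le_refl _, le_refl _⟩
      split <;> norm_num
    | succ k ih =>
      intro hk1 s'
      have hk : k < H := hk1
      have ihh := ih (le_of_lt hk)
      have hPnn : ∀ s a s', 0 ≤ P k s a s' := fun s a => (hP k hk s a).1
      have hπnn : ∀ s a, 0 ≤ π k s a := fun s => (hπ k hk s).1
      have e1 : Real.exp (2*(k:ℝ)/H) * Real.exp (2/H)
          = Real.exp (2*((k+1:ℕ):ℝ)/H) := by
        rw [← Real.exp_add]
        congr 1
        push_cast
        rw [← add_div]
        ring_nf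
      have e2 : Real.exp (-(2*(k:ℝ)/H)) * Real.exp (-(2/H))
          = Real.exp (-(2*((k+1:ℕ):ℝ)/H)) := by
        rw [← Real.exp_add]
        congr 1
        push_cast
        rw [← neg_add, ← add_div]
        ring_nf
      have hterm_nn : ∀ s a, 0 ≤ visit P π s₁ k s * π k s a * P k s a s' :=
        fun s a => mul_nonneg (mul_nonneg (ihh s).1 (hπnn s a)) (hPnn s a s')
      refine ⟨?_, ?_, ?_⟩
      · show (0:ℝ) ≤ ∑ s, ∑ a, visit P π s₁ k s * π k s a * P k s a s'
        exact Finset.sum_nonneg fun s _ => Finset.sum_nonneg fun a _ =>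
          hterm_nn s a
      · show Real.exp (-(2*((k+1:ℕ):ℝ)/H)) *
            (∑ s, ∑ a, visit P π s₁ k s * π k s a * P k s a s') ≤
          ∑ s, ∑ a, visit P π' s₁ k s * π' k s a * P k s a s'
        rw [Finset.mul_sum]
        refine Finset.sum_le_sum fun s _ => ?_
        rw [Finset.mul_sum]
        refine Finset.sum_le_sum fun a _ => ?_
        have h1 : Real.exp (-(2*((k+1:ℕ):ℝ)/H)) *
            (visit P π s₁ k s * π k s a * P k s a s')
            = (Real.exp (-(2*(k:ℝ)/H)) * visit P π s₁ k s) *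
              (Real.exp (-(2/H)) * π k s a) * P k s a s' := by
          rw [← e2]; ring
        rw [h1]
        refine mul_le_mul_of_nonneg_right ?_ (hPnn s a s')
        refine mul_le_mul (ihh s).2.1 (key k hk s a).2.1
          (mul_nonneg (Real.exp_pos _).le (hπnn s a)) ?_
        exact le_trans (mul_nonneg (Real.exp_pos _).le (ihh s).1) (ihh s).2.1
      · show (∑ s, ∑ a, visit P π' s₁ k s * π' k s a * P k s a s') ≤
          Real.exp (2*((k+1:ℕ):ℝ)/H) *
            ∑ s, ∑ a, visit P π s₁ k s * π k s a * P k s a s'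
        rw [Finset.mul_sum]
        refine Finset.sum_le_sum fun s _ => ?_
        rw [Finset.mul_sum]
        refine Finset.sum_le_sum fun a _ => ?_
        have h1 : Real.exp (2*((k+1:ℕ):ℝ)/H) *
            (visit P π s₁ k s * π k s a * P k s a s')
            = (Real.exp (2*(k:ℝ)/H) * visit P π s₁ k s) *
              (Real.exp (2/H) * π k s a) * P k s a s' := by
          rw [← e1]; ring
        rw [h1]
        refine mul_le_mul_of_nonneg_right ?_ (hPnn s a s')
        have hv'nn : 0 ≤ visit P π' s₁ k s :=
          le_trans (mul_nonneg (Real.exp_pos _).le (ihh s).1) (ihh s).2.1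
        exact mul_le_mul (ihh s).2.2 (key k hk s a).2.2 (key k hk s a).1
          (mul_nonneg (Real.exp_pos _).le (ihh s).1)
  -- conclude
  have hH : (0:ℝ) < H := by exact_mod_cast Nat.zero_lt_of_lt hh
  have ihh := vb h (le_of_lt hh)
  have hπnn : ∀ s a, 0 ≤ π h s a := fun s => (hπ h hh s).1
  have e1 : Real.exp (2*(h:ℝ)/H) * Real.exp (2/H)
      = Real.exp (2*((h+1:ℕ):ℝ)/H) := by
    rw [← Real.exp_add]; congr 1; push_cast; rw [← add_div]; ring_nf
  have e2 : Real.exp (-(2*(h:ℝ)/H)) * Real.exp (-(2/H))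
      = Real.exp (-(2*((h+1:ℕ):ℝ)/H)) := by
    rw [← Real.exp_add]; congr 1; push_cast
    rw [← neg_add, ← add_div]; ring_nf
  have hEnn : 0 ≤ Epi P π s₁ h f :=
    Finset.sum_nonneg fun s _ => Finset.sum_nonneg fun a _ =>
      mul_nonneg (mul_nonneg (ihh s).1 (hπnn s a)) (hf s a)
  have hub : Epi P π' s₁ h f ≤ Real.exp (2*((h+1:ℕ):ℝ)/H) * Epi P π s₁ h f := by
    unfold Epi
    rw [Finset.mul_sum]
    refine Finset.sum_le_sum fun s _ => ?_
    rw [Finset.mul_sum]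
    refine Finset.sum_le_sum fun a _ => ?_
    have h1 : Real.exp (2*((h+1:ℕ):ℝ)/H) *
        (visit P π s₁ h s * π h s a * f s a)
        = (Real.exp (2*(h:ℝ)/H) * visit P π s₁ h s) *
          (Real.exp (2/H) * π h s a) * f s a := by
      rw [← e1]; ring
    rw [h1]
    refine mul_le_mul_of_nonneg_right ?_ (hf s a)
    exact mul_le_mul (ihh s).2.2 (key h hh s a).2.2 (key h hh s a).1
      (mul_nonneg (Real.exp_pos _).le (ihh s).1)
  have hlb : Real.exp (-(2*((h+1:ℕ):ℝ)/H)) * Epi P π s₁ h f ≤ Epi P π' s₁ h f := by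
    unfold Epi
    rw [Finset.mul_sum]
    refine Finset.sum_le_sum fun s _ => ?_
    rw [Finset.mul_sum]
    refine Finset.sum_le_sum fun a _ => ?_
    have h1 : Real.exp (-(2*((h+1:ℕ):ℝ)/H)) *
        (visit P π s₁ h s * π h s a * f s a)
        = (Real.exp (-(2*(h:ℝ)/H)) * visit P π s₁ h s) *
          (Real.exp (-(2/H)) * π h s a) * f s a := by
      rw [← e2]; ring
    rw [h1]
    refine mul_le_mul_of_nonneg_right ?_ (hf s a)
    refine mul_le_mul (ihh s).2.1 (key h hh s a).2.1
      (mul_nonneg (Real.exp_pos _).le (hπnn s a)) ?_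
    exact le_trans (mul_nonneg (Real.exp_pos _).le (ihh s).1) (ihh s).2.1
  have hfrac : 2*((h+1:ℕ):ℝ)/H ≤ 2 := by
    rw [div_le_iff₀ hH]
    push_cast
    have : (h:ℝ) + 1 ≤ H := by exact_mod_cast Nat.succ_le_of_lt hh
    nlinarith
  constructor
  · refine le_trans ?_ hlb
    exact mul_le_mul_of_nonneg_right
      (Real.exp_le_exp.2 (by linarith)) hEnn
  · refine le_trans hub ?_
    exact mul_le_mul_of_nonneg_right (Real.exp_le_exp.2 hfrac) hEnn
end

section
/- Bound on Term (I) in the proof of Theorem 1: average optimistic regret of Optimistic NPG. Let (S, A, P, R, H) be an episodic MDP with initial state s₁, let η > 0 and K ∈ ℕ. Let π¹ be the uniform policy and, for k = 1,…,K, let Q̄^k_h : S×A → [0,H] (h ∈ {1,…,H}, Q̄^k_{H+1} ≡ 0) be arbitrary functions and define π^{k+1}_h(a|s) = π^k_h(a|s)·exp(η Q̄^k_h(s,a)) / Σ_{a'∈A} π^k_h(a'|s)·exp(η Q̄^k_h(s,a')). Set V̄^k_1(s₁) = Σ_{a∈A} π^k_1(a|s₁) Q̄^k_1(s₁,a). Assume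 the optimism condition Q̄^k_h(s,a) ≥ (T_h^{π^k} Q̄^k_{h+1})(s,a) for all k, h, s, a. Then there exists an absolute constant C > 0 such that (1/K) Σ_{k=1}^K ( V^⋆_1(s₁) − V̄^k_1(s₁) ) ≤ C·( H·log|A| / (ηK) + η·H³ ). -/
open Finset

lemma exp_quad {x : ℝ} (h0 : 0 ≤ x) (h1 : x ≤ 1) : Real.exp x ≤ 1 + x + x ^ 2 := by
  have h := Real.exp_bound' h0 h1 (n := 2) (by norm_num)
  have hs : (∑ m ∈ Finset.range 2, x ^ m / m.factorial) = 1 + x := by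
    simp [Finset.sum_range_succ]
  rw [hs] at h
  norm_num at h
  nlinarith [sq_nonneg x]

lemma hedge {A : Type} [Fintype A] [Nonempty A]
    (η B : ℝ) (hη : 0 < η) (hηB : η * B ≤ 1)
    (K : ℕ) (g : ℕ → A → ℝ) (hg : ∀ k < K, ∀ a, 0 ≤ g k a ∧ g k a ≤ B)
    (p : ℕ → A → ℝ) (hp0 : ∀ a, p 0 a = 1 / (Fintype.card A : ℝ))
    (hpk : ∀ k a, p (k+1) a = p k a * Real.exp (η * g k a) /
        ∑ a', p k a' * Real.exp (η * g k a'))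
    (q : A → ℝ) (hq : ∀ a, 0 ≤ q a) (hq1 : ∑ a, q a = 1) :
    ∑ k ∈ Finset.range K, ∑ a, (q a - p k a) * g k a
      ≤ Real.log (Fintype.card A) / η + η * K * B ^ 2 := by
  classical
  set G : ℕ → A → ℝ := fun k a => ∑ j ∈ Finset.range k, η * g j a with hG
  set Z : ℕ → ℝ := fun k => ∑ a, Real.exp (G k a) with hZ
  have cardpos : (0:ℝ) < Fintype.card A := by
    exact_mod_cast Fintype.card_pos
  have Zpos : ∀ k, 0 < Z k := fun k =>
    Finset.sum_pos (fun a _ => Real.exp_pos _) Finset.univ_nonempty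
  -- p in closed form
  have pform : ∀ k a, p k a = Real.exp (G k a) / Z k := by
    intro k
    induction k with
    | zero =>
      intro a
      simp [hp0, hG, hZ, Real.exp_zero]
    | succ k ih =>
      intro a
      have hGsucc : ∀ b, G (k+1) b = G k b + η * g k b := by
        intro b; simp [hG, Finset.sum_range_succ]
      have hden : (∑ a', p k a' * Real.exp (η * g k a'))
          = Z (k+1) / Z k := by
        rw [hZ]
        simp only [ih]
        rw [Finset.sum_div]
        refine Finset.sum_congr rfl fun b _ => ?_
        rw [hGsucc b, Real.exp_add]
        field_simp
        ring_nf
        exact mul_inv_cancel₀ (ne_of_gt (Zpos k))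
      rw [hpk, hden, ih, hGsucc a, Real.exp_add]
      field_simp
      ring_nf
      rw [mul_inv_cancel₀ (ne_of_gt (Zpos k)), one_mul]
  have pnonneg : ∀ k a, 0 ≤ p k a := by
    intro k a; rw [pform]; positivity
  have psum : ∀ k, ∑ a, p k a = 1 := by
    intro k
    simp only [pform]
    rw [← Finset.sum_div]
    exact div_self (ne_of_gt (Zpos k))
  -- step bound
  have step : ∀ k < K, Real.log (Z (k+1)) - Real.log (Z k)
      ≤ η * (∑ a, p k a * g k a) + η ^ 2 * B ^ 2 := by
    intro k hk
    have hGsucc : ∀ b, G (k+1) b = G k b + η * g k b := by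
      intro b; simp [hG, Finset.sum_range_succ]
    have hZsucc : Z (k+1) = Z k * ∑ a, p k a * Real.exp (η * g k a) := by
      rw [hZ, Finset.mul_sum]
      refine Finset.sum_congr rfl fun b _ => ?_
      rw [pform, hGsucc b, Real.exp_add]
      field_simp
      exact (div_self (ne_of_gt (Zpos k))).symm
    have hsum_le : (∑ a, p k a * Real.exp (η * g k a))
        ≤ 1 + (η * ∑ a, p k a * g k a + η ^ 2 * B ^ 2) := by
      have h1 : (∑ a, p k a * Real.exp (η * g k a))
          ≤ ∑ a, p k a * (1 + η * g k a + (η * B) ^ 2) := by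
        refine Finset.sum_le_sum fun a _ => ?_
        have hga := hg k hk a
        have hx0 : 0 ≤ η * g k a := mul_nonneg hη.le hga.1
        have hx1 : η * g k a ≤ η * B := mul_le_mul_of_nonneg_left hga.2 hη.le
        have he := exp_quad hx0 (le_trans hx1 hηB)
        have hsq : (η * g k a) ^ 2 ≤ (η * B) ^ 2 := by
          apply pow_le_pow_left₀ hx0 hx1
        exact mul_le_mul_of_nonneg_left (by linarith) (pnonneg k a)
      calc (∑ a, p k a * Real.exp (η * g k a))
          ≤ ∑ a, p k a * (1 + η * g k a + (η * B) ^ 2) := h1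
        _ = (∑ a, p k a) + η * (∑ a, p k a * g k a)
              + (η * B)^2 * (∑ a, p k a) := by
            rw [Finset.mul_sum, Finset.mul_sum]
            rw [← Finset.sum_add_distrib, ← Finset.sum_add_distrib]
            refine Finset.sum_congr rfl fun a _ => by ring
        _ = 1 + (η * ∑ a, p k a * g k a + η ^ 2 * B ^ 2) := by
            rw [psum]; ring
    have hpos : (0:ℝ) < ∑ a, p k a * Real.exp (η * g k a) := by
      nlinarith [Zpos (k+1), Zpos k, hZsucc]
    calc Real.log (Z (k+1)) - Real.log (Z k)
        = Real.log (∑ a, p k a * Real.exp (η * g k a)) := by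
          rw [hZsucc, Real.log_mul (ne_of_gt (Zpos k)) (ne_of_gt hpos)]; ring
      _ ≤ (∑ a, p k a * Real.exp (η * g k a)) - 1 :=
          Real.log_le_sub_one_of_pos hpos
      _ ≤ η * (∑ a, p k a * g k a) + η ^ 2 * B ^ 2 := by linarith
  -- lower bound on log Z K
  have lower : ∀ a, G K a ≤ Real.log (Z K) := by
    intro a
    rw [Real.le_log_iff_exp_le (Zpos K)]
    exact Finset.single_le_sum (fun b _ => (Real.exp_pos _).le) (Finset.mem_univ a)
  have qlower : ∑ a, q a * G K a ≤ Real.log (Z K) := by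
    calc ∑ a, q a * G K a ≤ ∑ a, q a * Real.log (Z K) :=
          Finset.sum_le_sum fun a _ => mul_le_mul_of_nonneg_left (lower a) (hq a)
      _ = Real.log (Z K) := by rw [← Finset.sum_mul, hq1, one_mul]
  have telescope : Real.log (Z K)
      = Real.log (Fintype.card A) + ∑ k ∈ Finset.range K,
          (Real.log (Z (k+1)) - Real.log (Z k)) := by
    rw [Finset.sum_range_sub (fun k => Real.log (Z k))]
    have hZ0 : Z 0 = Fintype.card A := by
      simp [hZ, hG]
    rw [hZ0]; ring
  have h1 : ∑ a, q a * G K a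
      = η * ∑ k ∈ Finset.range K, ∑ a, q a * g k a := by
    simp only [hG, Finset.mul_sum]
    rw [Finset.sum_comm]
    exact Finset.sum_congr rfl fun j _ => Finset.sum_congr rfl fun a _ => by ring
  have main : η * (∑ k ∈ Finset.range K, ∑ a, q a * g k a)
      ≤ Real.log (Fintype.card A)
        + ∑ k ∈ Finset.range K, (η * (∑ a, p k a * g k a) + η ^ 2 * B ^ 2) := by
    calc η * (∑ k ∈ Finset.range K, ∑ a, q a * g k a)
        = ∑ a, q a * G K a := h1.symm
      _ ≤ Real.log (Z K) := qlower
      _ = _ := telescope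
      _ ≤ _ := add_le_add_right
          (Finset.sum_le_sum fun k hk => step k (Finset.mem_range.mp hk)) _
  have hsum : ∑ k ∈ Finset.range K, (η * (∑ a, p k a * g k a) + η ^ 2 * B ^ 2)
      = η * (∑ k ∈ Finset.range K, ∑ a, p k a * g k a) + K * (η ^ 2 * B ^ 2) := by
    rw [Finset.sum_add_distrib, ← Finset.mul_sum, Finset.sum_const, Finset.card_range,
      nsmul_eq_mul]
  rw [hsum] at main
  have expand : ∑ k ∈ Finset.range K, ∑ a, (q a - p k a) * g k a
      = (∑ k ∈ Finset.range K, ∑ a, q a * g k a)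
        - ∑ k ∈ Finset.range K, ∑ a, p k a * g k a := by
    rw [← Finset.sum_sub_distrib]
    refine Finset.sum_congr rfl fun k _ => ?_
    rw [← Finset.sum_sub_distrib]
    exact Finset.sum_congr rfl fun a _ => by ring
  rw [expand]
  have hb : Real.log (Fintype.card A) / η + η * K * B ^ 2
      = (Real.log (Fintype.card A) + η * (η * K * B ^ 2)) / η := by
    rw [eq_div_iff hη.ne']; field_simp
  rw [hb, le_div_iff₀ hη]
  nlinarith [main]


lemma Val_succ {S A : Type} [Fintype S] [Fintype A]
    (P : ℕ → S → A → S → ℝ) (R : ℕ → S → A → ℝ) (H : ℕ) (π : ℕ → S → A → ℝ)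
    (h : ℕ) (hh : h < H) (s : S) :
    Val P R H π h s
      = ∑ a, π h s a * (R h s a + ∑ s', P h s a s' * Val P R H π (h+1) s') := by
  have ht : H - h = (H - (h+1)) + 1 := by omega
  unfold Val
  rw [ht]
  rw [Vaux]

lemma Val_top {S A : Type} [Fintype S] [Fintype A]
    (P : ℕ → S → A → S → ℝ) (R : ℕ → S → A → ℝ) (H : ℕ) (π : ℕ → S → A → ℝ)
    (s : S) : Val P R H π H s = 0 := by
  unfold Val
  rw [Nat.sub_self]
  rw [Vaux]

lemma Vaux_bounds {S A : Type} [Fintype S] [Fintype A]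
    (P : ℕ → S → A → S → ℝ) (R : ℕ → S → A → ℝ) (H : ℕ) (π : ℕ → S → A → ℝ)
    (hP : IsKernel H P) (hR : IsReward H R) (hπ : IsPolicy H π) :
    ∀ t h, h + t ≤ H → ∀ s, 0 ≤ Vaux P R π t h s ∧ Vaux P R π t h s ≤ t := by
  intro t
  induction t with
  | zero => intro h _ s; simp [Vaux]
  | succ t ih =>
    intro h hht s
    have hh : h < H := by omega
    obtain ⟨hπnn, hπ1⟩ := hπ h hh s
    have hin : ∀ a, 0 ≤ R h s a + ∑ s', P h s a s' * Vaux P R π t (h+1) s'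
        ∧ R h s a + ∑ s', P h s a s' * Vaux P R π t (h+1) s' ≤ 1 + t := by
      intro a
      obtain ⟨hPnn, hP1⟩ := hP h hh s a
      have hRa := hR h hh s a
      constructor
      · have : 0 ≤ ∑ s', P h s a s' * Vaux P R π t (h+1) s' :=
          Finset.sum_nonneg fun s' _ =>
            mul_nonneg (hPnn s') (ih (h+1) (by omega) s').1
        linarith [hRa.1]
      · have : ∑ s', P h s a s' * Vaux P R π t (h+1) s' ≤ ∑ s', P h s a s' * t :=
          Finset.sum_le_sum fun s' _ =>
            mul_le_mul_of_nonneg_left (ih (h+1) (by omega) s').2 (hPnn s')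
        rw [← Finset.sum_mul, hP1, one_mul] at this
        linarith [hRa.2]
    rw [Vaux]
    constructor
    · exact Finset.sum_nonneg fun a _ => mul_nonneg (hπnn a) (hin a).1
    · calc (∑ a, π h s a * (R h s a + ∑ s', P h s a s' * Vaux P R π t (h+1) s'))
          ≤ ∑ a, π h s a * (1 + t) :=
            Finset.sum_le_sum fun a _ =>
              mul_le_mul_of_nonneg_left (hin a).2 (hπnn a)
        _ = 1 + t := by rw [← Finset.sum_mul, hπ1, one_mul]
        _ = ((t + 1 : ℕ) : ℝ) := by push_cast; ring

lemma visit_nonneg {S A : Type} [Fintype S] [Fintype A] [DecidableEq S]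
    (P : ℕ → S → A → S → ℝ) (H : ℕ) (π : ℕ → S → A → ℝ) (s₁ : S)
    (hP : IsKernel H P) (hπ : IsPolicy H π) :
    ∀ h, h ≤ H → ∀ s, 0 ≤ visit P π s₁ h s := by
  intro h
  induction h with
  | zero => intro _ s; rw [visit]; split_ifs <;> norm_num
  | succ h ih =>
    intro hh s'
    rw [visit]
    refine Finset.sum_nonneg fun s _ => Finset.sum_nonneg fun a _ => ?_
    exact mul_nonneg (mul_nonneg (ih (by omega) s)
      ((hπ h (by omega) s).1 a)) ((hP h (by omega) s a).1 s')

lemma visit_sum {S A : Type} [Fintype S] [Fintype A] [DecidableEq S]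
    (P : ℕ → S → A → S → ℝ) (H : ℕ) (π : ℕ → S → A → ℝ) (s₁ : S)
    (hP : IsKernel H P) (hπ : IsPolicy H π) :
    ∀ h, h ≤ H → ∑ s, visit P π s₁ h s = 1 := by
  intro h
  induction h with
  | zero => intro _; simp [visit]
  | succ h ih =>
    intro hh
    have hswap : ∑ s', ∑ s, ∑ a, visit P π s₁ h s * π h s a * P h s a s'
        = ∑ s, ∑ a, ∑ s', visit P π s₁ h s * π h s a * P h s a s' := by
      rw [Finset.sum_comm]
      exact Finset.sum_congr rfl fun s _ => Finset.sum_comm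
    calc ∑ s', visit P π s₁ (h+1) s'
        = ∑ s', ∑ s, ∑ a, visit P π s₁ h s * π h s a * P h s a s' := by
          refine Finset.sum_congr rfl fun s' _ => ?_; rw [visit]
      _ = ∑ s, ∑ a, ∑ s', visit P π s₁ h s * π h s a * P h s a s' := hswap
      _ = ∑ s, visit P π s₁ h s := by
          refine Finset.sum_congr rfl fun s _ => ?_
          have : ∀ a, ∑ s', visit P π s₁ h s * π h s a * P h s a s'
              = visit P π s₁ h s * π h s a := by
            intro a
            rw [← Finset.mul_sum, (hP h (by omega) s a).2, mul_one]
          rw [Finset.sum_congr rfl fun a _ => this a]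
          rw [← Finset.mul_sum, (hπ h (by omega) s).2, mul_one]
      _ = 1 := ih (by omega)

lemma decomp {S A : Type} [Fintype S] [Fintype A] [DecidableEq S]
    (P : ℕ → S → A → S → ℝ) (R : ℕ → S → A → ℝ) (H : ℕ) (s₁ : S)
    (hP : IsKernel H P)
    (πst : ℕ → S → A → ℝ) (hπst : IsPolicy H πst)
    (πk : ℕ → S → A → ℝ) (Q : ℕ → S → A → ℝ)
    (hQH : ∀ s a, Q H s a = 0)
    (hopt : ∀ h < H, ∀ s a, Bellman P R πk h (Q (h+1)) s a ≤ Q h s a) :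
    Val P R H πst 0 s₁ - (∑ a, πk 0 s₁ a * Q 0 s₁ a)
      ≤ ∑ h ∈ Finset.range H, ∑ s, visit P πst s₁ h s *
          ∑ a, (πst h s a - πk h s a) * Q h s a := by
  classical
  set W : ℕ → S → ℝ := fun h s => ∑ a, πk h s a * Q h s a with hW
  set F : ℕ → ℝ := fun h =>
    ∑ s, visit P πst s₁ h s * (Val P R H πst h s - W h s) with hF
  set T : ℕ → ℝ := fun h =>
    ∑ s, visit P πst s₁ h s * ∑ a, (πst h s a - πk h s a) * Q h s a with hT
  have hFH : F H = 0 := by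
    have : ∀ s, Val P R H πst H s - W H s = 0 := by
      intro s
      rw [Val_top, hW]
      simp [hQH]
    simp only [hF, this, mul_zero, Finset.sum_const_zero]
  have step : ∀ h, h < H → F h ≤ T h + F (h+1) := by
    intro h hh
    have hv : ∀ s, 0 ≤ visit P πst s₁ h s :=
      visit_nonneg P H πst s₁ hP hπst h hh.le
    have pointwise : ∀ s, visit P πst s₁ h s * (Val P R H πst h s - W h s)
        ≤ visit P πst s₁ h s *
          ((∑ a, (πst h s a - πk h s a) * Q h s a)
            + ∑ a, πst h s a *
                ∑ s', P h s a s' * (Val P R H πst (h+1) s' - W (h+1) s')) := by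
      intro s
      refine mul_le_mul_of_nonneg_left ?_ (hv s)
      rw [Val_succ P R H πst h hh s]
      have key : ∀ a, πst h s a * (R h s a + ∑ s', P h s a s' * Val P R H πst (h+1) s')
          ≤ πst h s a * Q h s a
            + πst h s a * ∑ s', P h s a s' * (Val P R H πst (h+1) s' - W (h+1) s') := by
        intro a
        have hb := hopt h hh s a
        have hBW : R h s a + ∑ s', P h s a s' * W (h+1) s' ≤ Q h s a := hb
        have expand : ∑ s', P h s a s' * (Val P R H πst (h+1) s' - W (h+1) s')
            = (∑ s', P h s a s' * Val P R H πst (h+1) s')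
              - ∑ s', P h s a s' * W (h+1) s' := by
          rw [← Finset.sum_sub_distrib]
          exact Finset.sum_congr rfl fun s' _ => by ring
        have hstep : R h s a + ∑ s', P h s a s' * Val P R H πst (h+1) s'
            ≤ Q h s a + ∑ s', P h s a s' * (Val P R H πst (h+1) s' - W (h+1) s') := by
          rw [expand]; linarith
        calc πst h s a * (R h s a + ∑ s', P h s a s' * Val P R H πst (h+1) s')
            ≤ πst h s a * (Q h s a
                + ∑ s', P h s a s' * (Val P R H πst (h+1) s' - W (h+1) s')) :=
              mul_le_mul_of_nonneg_left hstep ((hπst h hh s).1 a)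
          _ = _ := by ring
      have e1 : ∑ a, (πst h s a - πk h s a) * Q h s a
          = (∑ a, πst h s a * Q h s a) - ∑ a, πk h s a * Q h s a := by
        rw [← Finset.sum_sub_distrib]
        exact Finset.sum_congr rfl fun a _ => by ring
      have e3 := Finset.sum_le_sum fun a (_ : a ∈ Finset.univ) => key a
      rw [Finset.sum_add_distrib] at e3
      rw [hW]
      linarith
    have hswap : ∑ s, visit P πst s₁ h s *
        ∑ a, πst h s a * ∑ s', P h s a s' * (Val P R H πst (h+1) s' - W (h+1) s')
        = F (h+1) := by
      have hvisit : ∀ s', visit P πst s₁ (h+1) s'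
          = ∑ s, ∑ a, visit P πst s₁ h s * πst h s a * P h s a s' := by
        intro s'; rw [visit]
      have triple : ∀ X : S → A → S → ℝ,
          ∑ s', ∑ s, ∑ a, X s a s' = ∑ s, ∑ a, ∑ s', X s a s' := by
        intro X
        rw [Finset.sum_comm]
        exact Finset.sum_congr rfl fun s _ => Finset.sum_comm
      calc ∑ s, visit P πst s₁ h s *
            ∑ a, πst h s a * ∑ s', P h s a s' * (Val P R H πst (h+1) s' - W (h+1) s')
          = ∑ s, ∑ a, ∑ s', visit P πst s₁ h s * πst h s a * P h s a s'
              * (Val P R H πst (h+1) s' - W (h+1) s') := by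
            refine Finset.sum_congr rfl fun s _ => ?_
            rw [Finset.mul_sum]
            refine Finset.sum_congr rfl fun a _ => ?_
            rw [Finset.mul_sum, Finset.mul_sum]
            exact Finset.sum_congr rfl fun s' _ => by ring
        _ = ∑ s', ∑ s, ∑ a, visit P πst s₁ h s * πst h s a * P h s a s'
              * (Val P R H πst (h+1) s' - W (h+1) s') := (triple _).symm
        _ = F (h+1) := by
            rw [hF]
            refine Finset.sum_congr rfl fun s' _ => ?_
            rw [hvisit s', Finset.sum_mul]
            refine Finset.sum_congr rfl fun s _ => ?_
            rw [Finset.sum_mul]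
    calc F h ≤ ∑ s, visit P πst s₁ h s *
          ((∑ a, (πst h s a - πk h s a) * Q h s a)
            + ∑ a, πst h s a *
                ∑ s', P h s a s' * (Val P R H πst (h+1) s' - W (h+1) s')) :=
          Finset.sum_le_sum fun s _ => pointwise s
      _ = T h + ∑ s, visit P πst s₁ h s *
            ∑ a, πst h s a *
              ∑ s', P h s a s' * (Val P R H πst (h+1) s' - W (h+1) s') := by
          rw [hT, ← Finset.sum_add_distrib]
          exact Finset.sum_congr rfl fun s _ => by ring
      _ = T h + F (h+1) := by rw [hswap]
  have claim : ∀ n, n ≤ H → F (H - n) ≤ ∑ h ∈ Finset.Ico (H - n) H, T h := by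
    intro n
    induction n with
    | zero =>
      intro _
      simp only [Nat.sub_zero, Finset.Ico_self, Finset.sum_empty, hFH, le_refl]
    | succ n ih =>
      intro hn
      have h1 : H - (n+1) < H := by omega
      have h2 : H - (n+1) + 1 = H - n := by omega
      have hs := step (H - (n+1)) h1
      rw [h2] at hs
      have hsum : ∑ h ∈ Finset.Ico (H - (n+1)) H, T h
          = T (H - (n+1)) + ∑ h ∈ Finset.Ico (H - n) H, T h := by
        rw [Finset.sum_eq_sum_Ico_succ_bot h1, h2]
      rw [hsum]
      exact le_trans hs (add_le_add_right (ih (by omega)) _)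
  have hmain := claim H le_rfl
  rw [Nat.sub_self] at hmain
  have hF0 : F 0 = Val P R H πst 0 s₁ - W 0 s₁ := by
    rw [hF]
    have : ∀ s, visit P πst s₁ 0 s = if s = s₁ then 1 else 0 := fun s => by rw [visit]
    simp only [this, ite_mul, one_mul, zero_mul]
    rw [Finset.sum_ite_eq' Finset.univ s₁
      (fun s => Val P R H πst 0 s - W 0 s)]
    simp
  rw [hF0] at hmain
  rw [hW] at hmain
  rw [← Finset.range_eq_Ico] at hmain
  exact hmain

lemma pi_props {S A : Type} [Fintype A] [Nonempty A]
    (η : ℝ) (Qbar : ℕ → ℕ → S → A → ℝ) (π : ℕ → ℕ → S → A → ℝ)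
    (hπ0 : ∀ h s a, π 0 h s a = 1 / (Fintype.card A : ℝ))
    (hπk : ∀ k h s a, π (k+1) h s a = π k h s a * Real.exp (η * Qbar k h s a) /
        ∑ a', π k h s a' * Real.exp (η * Qbar k h s a')) :
    ∀ k h s, (∀ a, 0 < π k h s a) ∧ ∑ a, π k h s a = 1 := by
  intro k
  induction k with
  | zero =>
    intro h s
    have cardpos : (0:ℝ) < Fintype.card A := by exact_mod_cast Fintype.card_pos
    constructor
    · intro a; rw [hπ0]; positivity
    · simp only [hπ0, Finset.sum_const, Finset.card_univ, nsmul_eq_mul]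
      field_simp
  | succ k ih =>
    intro h s
    have hZ : 0 < ∑ a', π k h s a' * Real.exp (η * Qbar k h s a') :=
      Finset.sum_pos (fun a _ => mul_pos ((ih h s).1 a) (Real.exp_pos _))
        Finset.univ_nonempty
    constructor
    · intro a; rw [hπk]
      exact div_pos (mul_pos ((ih h s).1 a) (Real.exp_pos _)) hZ
    · simp only [hπk]
      rw [← Finset.sum_div]
      exact div_self (ne_of_gt hZ)


/-- **Bound on Term (I) in the proof of Theorem 1: average optimistic regret of
Optimistic NPG.** Steps and iterations are 0-based; `Q̄^k_H ≡ 0`. -/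
theorem optimistic_npg_term_one :
    ∃ C : ℝ, 0 < C ∧
      ∀ (S A : Type) [Fintype S] [Fintype A] [DecidableEq S] [Nonempty S] [Nonempty A]
        (P : ℕ → S → A → S → ℝ) (R : ℕ → S → A → ℝ) (H : ℕ) (s₁ : S)
        (η : ℝ) (K : ℕ)
        (Qbar : ℕ → ℕ → S → A → ℝ) (π : ℕ → ℕ → S → A → ℝ),
        IsKernel H P → IsReward H R → 0 < η →
        -- the Q̄'s take values in [0,H], with Q̄^k_H ≡ 0
        (∀ k h, h < H → ∀ s a, 0 ≤ Qbar k h s a ∧ Qbar k h s a ≤ H) →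
        (∀ k s a, Qbar k H s a = 0) →
        -- π⁰ uniform, mirror-ascent updates
        (∀ h s a, π 0 h s a = 1 / (Fintype.card A : ℝ)) →
        (∀ k h s a, π (k+1) h s a =
          π k h s a * Real.exp (η * Qbar k h s a) /
            ∑ a', π k h s a' * Real.exp (η * Qbar k h s a')) →
        -- optimism: Q̄^k_h ≥ T_h^{π^k} Q̄^k_{h+1}
        (∀ k < K, ∀ h < H, ∀ (s : S) (a : A),
          Bellman P R (π k) h (Qbar k (h+1)) s a ≤ Qbar k h s a) →
        -- conclusion, stated for every comparator policy (in particular the optimal one)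
        ∀ πstar : ℕ → S → A → ℝ, IsPolicy H πstar →
          (1 / (K : ℝ)) *
              ∑ k ∈ Finset.range K,
                (Val P R H πstar 0 s₁ - ∑ a, π k 0 s₁ a * Qbar k 0 s₁ a)
            ≤ C * ((H : ℝ) * Real.log (Fintype.card A) / (η * K) + η * (H : ℝ) ^ 3) := by
  refine ⟨2, by norm_num, ?_⟩
  intro S A _ _ _ _ _ P R H s₁ η K Qbar π hP hR hη hQ hQH hπ0 hπk hopt πstar hπstar
  have cardA1 : (1:ℝ) ≤ Fintype.card A := by exact_mod_cast Fintype.card_pos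
  have hlog : 0 ≤ Real.log (Fintype.card A) := Real.log_nonneg cardA1
  have hπprop := pi_props η Qbar π hπ0 hπk
  set L := Real.log (Fintype.card A) with hL
  rcases Nat.eq_zero_or_pos K with hK | hK
  · subst hK
    simp only [Nat.cast_zero, Finset.range_zero, Finset.sum_empty, mul_zero, div_zero,
      zero_add]
    positivity
  rcases Nat.eq_zero_or_pos H with hH | hH
  · subst hH
    have hval : Val P R 0 πstar 0 s₁ = 0 := Val_top P R 0 πstar s₁
    have hsum : ∀ k, (∑ a, π k 0 s₁ a * Qbar k 0 s₁ a) = 0 := by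
      intro k
      simp [hQH k s₁]
    simp only [hval, hsum, sub_zero, zero_sub, Nat.cast_zero]
    norm_num
  have hKpos : (0:ℝ) < K := by exact_mod_cast hK
  have hHpos : (0:ℝ) < H := by exact_mod_cast hH
  have hH1 : (1:ℝ) ≤ H := by exact_mod_cast hH
  by_cases hbig : 1 ≤ η * (H:ℝ)^2
  · -- large step size: trivial bound
    have term_le : ∀ k, Val P R H πstar 0 s₁ - ∑ a, π k 0 s₁ a * Qbar k 0 s₁ a ≤ H := by
      intro k
      have h1 : Val P R H πstar 0 s₁ ≤ H := by
        have hb := (Vaux_bounds P R H πstar hP hR hπstar H 0 (by omega) s₁).2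
        unfold Val
        simpa using hb
      have h2 : 0 ≤ ∑ a, π k 0 s₁ a * Qbar k 0 s₁ a :=
        Finset.sum_nonneg fun a _ =>
          mul_nonneg ((hπprop k 0 s₁).1 a).le (hQ k 0 hH s₁ a).1
      linarith
    have hsum : ∑ k ∈ Finset.range K,
        (Val P R H πstar 0 s₁ - ∑ a, π k 0 s₁ a * Qbar k 0 s₁ a) ≤ K * H := by
      calc ∑ k ∈ Finset.range K,
            (Val P R H πstar 0 s₁ - ∑ a, π k 0 s₁ a * Qbar k 0 s₁ a)
          ≤ ∑ _k ∈ Finset.range K, (H:ℝ) := Finset.sum_le_sum fun k _ => term_le k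
        _ = K * H := by simp [mul_comm]
    calc (1 / (K:ℝ)) * ∑ k ∈ Finset.range K,
          (Val P R H πstar 0 s₁ - ∑ a, π k 0 s₁ a * Qbar k 0 s₁ a)
        ≤ (1 / (K:ℝ)) * (K * H) := by
          exact mul_le_mul_of_nonneg_left hsum (by positivity)
      _ = H := by field_simp
      _ ≤ 2 * ((H:ℝ) * L / (η * K) + η * (H:ℝ) ^ 3) := by
        have h3 : (H:ℝ) ≤ η * (H:ℝ)^3 := by nlinarith
        have h4 : 0 ≤ (H:ℝ) * L / (η * K) := by positivity
        linarith
  · push_neg at hbig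
    have hηH : η * (H:ℝ) ≤ 1 := by nlinarith
    have hedge_hs : ∀ h, h < H → ∀ s : S,
        ∑ k ∈ Finset.range K, ∑ a, (πstar h s a - π k h s a) * Qbar k h s a
          ≤ L / η + η * K * (H:ℝ)^2 := by
      intro h hh s
      exact hedge η (H:ℝ) hη hηH K (fun k a => Qbar k h s a)
        (fun k _ a => hQ k h hh s a)
        (fun k a => π k h s a) (fun a => hπ0 h s a) (fun k a => hπk k h s a)
        (fun a => πstar h s a) (hπstar h hh s).1 (hπstar h hh s).2
    have dec : ∀ k ∈ Finset.range K,
        Val P R H πstar 0 s₁ - (∑ a, π k 0 s₁ a * Qbar k 0 s₁ a)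
          ≤ ∑ h ∈ Finset.range H, ∑ s, visit P πstar s₁ h s *
              ∑ a, (πstar h s a - π k h s a) * Qbar k h s a := by
      intro k hk
      exact decomp P R H s₁ hP πstar hπstar (π k) (Qbar k) (hQH k)
        (fun h hh s a => hopt k (Finset.mem_range.mp hk) h hh s a)
    have sum1 : ∑ k ∈ Finset.range K,
        (Val P R H πstar 0 s₁ - ∑ a, π k 0 s₁ a * Qbar k 0 s₁ a)
        ≤ ∑ k ∈ Finset.range K, ∑ h ∈ Finset.range H, ∑ s, visit P πstar s₁ h s *
            ∑ a, (πstar h s a - π k h s a) * Qbar k h s a :=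
      Finset.sum_le_sum dec
    have swap : ∑ k ∈ Finset.range K, ∑ h ∈ Finset.range H, ∑ s, visit P πstar s₁ h s *
            ∑ a, (πstar h s a - π k h s a) * Qbar k h s a
        = ∑ h ∈ Finset.range H, ∑ s, visit P πstar s₁ h s *
            ∑ k ∈ Finset.range K, ∑ a, (πstar h s a - π k h s a) * Qbar k h s a := by
      rw [Finset.sum_comm]
      refine Finset.sum_congr rfl fun h _ => ?_
      rw [Finset.sum_comm]
      refine Finset.sum_congr rfl fun s _ => ?_
      rw [Finset.mul_sum]
    have bound2 : ∑ h ∈ Finset.range H, ∑ s, visit P πstar s₁ h s *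
            ∑ k ∈ Finset.range K, ∑ a, (πstar h s a - π k h s a) * Qbar k h s a
        ≤ (H:ℝ) * (L / η + η * K * (H:ℝ)^2) := by
      have stepb : ∀ h ∈ Finset.range H, ∑ s, visit P πstar s₁ h s *
            ∑ k ∈ Finset.range K, ∑ a, (πstar h s a - π k h s a) * Qbar k h s a
          ≤ L / η + η * K * (H:ℝ)^2 := by
        intro h hh
        have hhH : h < H := Finset.mem_range.mp hh
        calc ∑ s, visit P πstar s₁ h s *
              ∑ k ∈ Finset.range K, ∑ a, (πstar h s a - π k h s a) * Qbar k h s a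
            ≤ ∑ s, visit P πstar s₁ h s * (L / η + η * K * (H:ℝ)^2) :=
              Finset.sum_le_sum fun s _ =>
                mul_le_mul_of_nonneg_left (hedge_hs h hhH s)
                  (visit_nonneg P H πstar s₁ hP hπstar h hhH.le s)
          _ = L / η + η * K * (H:ℝ)^2 := by
              rw [← Finset.sum_mul, visit_sum P H πstar s₁ hP hπstar h hhH.le, one_mul]
      calc ∑ h ∈ Finset.range H, ∑ s, visit P πstar s₁ h s *
              ∑ k ∈ Finset.range K, ∑ a, (πstar h s a - π k h s a) * Qbar k h s a
          ≤ ∑ _h ∈ Finset.range H, (L / η + η * K * (H:ℝ)^2) :=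
            Finset.sum_le_sum stepb
        _ = (H:ℝ) * (L / η + η * K * (H:ℝ)^2) := by
            rw [Finset.sum_const, Finset.card_range, nsmul_eq_mul]
    have total : ∑ k ∈ Finset.range K,
        (Val P R H πstar 0 s₁ - ∑ a, π k 0 s₁ a * Qbar k 0 s₁ a)
        ≤ (H:ℝ) * (L / η + η * K * (H:ℝ)^2) := by
      rw [swap] at sum1
      exact le_trans sum1 bound2
    calc (1 / (K:ℝ)) * ∑ k ∈ Finset.range K,
          (Val P R H πstar 0 s₁ - ∑ a, π k 0 s₁ a * Qbar k 0 s₁ a)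
        ≤ (1 / (K:ℝ)) * ((H:ℝ) * (L / η + η * K * (H:ℝ)^2)) :=
          mul_le_mul_of_nonneg_left total (by positivity)
      _ = (H:ℝ) * L / (η * K) + η * (H:ℝ)^3 := by
          field_simp
      _ ≤ 2 * ((H:ℝ) * L / (η * K) + η * (H:ℝ)^3) := by
          have h4 : 0 ≤ (H:ℝ) * L / (η * K) := by positivity
          have h5 : 0 ≤ η * (H:ℝ)^3 := by positivity
          linarith
end
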